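/- arXiv:cs/0503063 — 8 statements merged into one kernel-verified Lean document; each statement's English description precedes it below -/
import Mathlib

section
/- Let snr be a nonnegative real random variable with finite mean. Let mmse : [0,∞) → ℝ be a continuous function with 0 ≤ mmse(γ) ≤ 1 for all γ ≥ 0, and let I : [0,∞) → ℝ be defined by I(γ) = (1/2) ∫₀^γ mmse(s) ds. Suppose η : (0,∞) → (0,1] is differentiable, extends continuously to β = 0 with η(0) = 1, and satisfies the fixed-point equation 1/η(β) = 1 + β·E[snr · mmse(η(β)·snr)] for every β > 0. Define the separate-decoding spectral efficiency C_sep(β) = β·E[I(η(β)·snr)] and the joint-decoding spectral efficiency C_joint(β) = C_sep(β) + (1/2)(η(β) − 1 − ln η(β)). Then for every β > 0, C_joint(β) = ∫₀^β C_sep(β′)/β′ dβ′. -/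
open MeasureTheory Real

/-- For the optimal multiuser efficiency `η` solving the fixed-point
equation `1/η(β) = 1 + β·E[snr · mmse(η(β)·snr)]`, the joint-decoding spectral efficiency
equals the integral `∫₀^β C_sep(β')/β' dβ'`. -/
theorem cdma_joint_eq_integral_sep
    {Ω : Type*} [MeasureSpace Ω] [IsProbabilityMeasure (volume : Measure Ω)]
    (snr : Ω → ℝ) (hsnr_meas : Measurable snr)
    (hsnr_nonneg : ∀ ω, 0 ≤ snr ω) (hsnr_int : Integrable snr)
    (mmse : ℝ → ℝ) (hmmse_cont : ContinuousOn mmse (Set.Ici 0))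
    (hmmse_nonneg : ∀ γ, 0 ≤ γ → 0 ≤ mmse γ)
    (hmmse_le_one : ∀ γ, 0 ≤ γ → mmse γ ≤ 1)
    (I : ℝ → ℝ) (hI : ∀ γ, 0 ≤ γ → I γ = (1 / 2) * ∫ s in (0:ℝ)..γ, mmse s)
    (η : ℝ → ℝ)
    (hη_diff : ∀ β, 0 < β → DifferentiableAt ℝ η β)
    (hη_pos : ∀ β, 0 < β → 0 < η β) (hη_le_one : ∀ β, 0 < β → η β ≤ 1)
    (hη_cont0 : ContinuousWithinAt η (Set.Ici 0) 0) (hη0 : η 0 = 1)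
    (hfix : ∀ β, 0 < β →
      1 / η β = 1 + β * ∫ ω, snr ω * mmse (η β * snr ω))
    (Csep Cjoint : ℝ → ℝ)
    (hCsep : ∀ β, Csep β = β * ∫ ω, I (η β * snr ω))
    (hCjoint : ∀ β, Cjoint β = Csep β + (1 / 2) * (η β - 1 - Real.log (η β))) :
    ∀ β, 0 < β → Cjoint β = ∫ β' in (0:ℝ)..β, Csep β' / β' := by
  classical
  -- globalized mmse
  set m : ℝ → ℝ := fun s => mmse (max s 0) with hm_def
  have hm_cont : Continuous m :=
    hmmse_cont.comp_continuous (continuous_id.max continuous_const)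
      (fun x => Set.mem_Ici.mpr (le_max_right _ _))
  have hm_nonneg : ∀ s, 0 ≤ m s := fun s => hmmse_nonneg _ (le_max_right _ _)
  have hm_le_one : ∀ s, m s ≤ 1 := fun s => hmmse_le_one _ (le_max_right _ _)
  have hm_eq : ∀ s, 0 ≤ s → m s = mmse s := fun s hs => by
    simp [hm_def, max_eq_left hs]
  -- globalized mutual information
  set J : ℝ → ℝ := fun γ => (1 / 2) * ∫ s in (0:ℝ)..γ, m s with hJ_def
  have hJderiv : ∀ γ, HasDerivAt J ((1 / 2) * m γ) γ := fun γ =>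
    ((hm_cont.integral_hasStrictDerivAt 0 γ).hasDerivAt).const_mul (1 / 2)
  have hJ_diff : Differentiable ℝ J := fun γ => (hJderiv γ).differentiableAt
  have hJ_cont : Continuous J := hJ_diff.continuous
  have hJ0 : J 0 = 0 := by simp [hJ_def]
  have hJ_lip : ∀ x y : ℝ, |J x - J y| ≤ (1 / 2) * |x - y| := by
    intro x y
    have hsub : J x - J y = (1 / 2) * ∫ s in y..x, m s := by
      rw [hJ_def]
      rw [← mul_sub, intervalIntegral.integral_interval_sub_left
        (hm_cont.intervalIntegrable _ _) (hm_cont.intervalIntegrable _ _)]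
    rw [hsub, abs_mul]
    have : |∫ s in y..x, m s| ≤ 1 * |x - y| := by
      have := intervalIntegral.norm_integral_le_of_norm_le_const
        (C := 1) (f := m) (a := y) (b := x) (fun s _ => by
          rw [Real.norm_eq_abs, abs_of_nonneg (hm_nonneg s)]; exact hm_le_one s)
      simpa [Real.norm_eq_abs] using this
    calc |(1:ℝ)/2| * |∫ s in y..x, m s| ≤ (1/2) * (1 * |x - y|) := by
          rw [abs_of_nonneg (by norm_num : (0:ℝ) ≤ 1/2)]
          exact mul_le_mul_of_nonneg_left this (by norm_num)
      _ = (1/2) * |x - y| := by ring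
  have hJ_bound : ∀ x : ℝ, |J x| ≤ (1 / 2) * |x| := fun x => by
    simpa [hJ0] using hJ_lip x 0
  have hJI : ∀ γ, 0 ≤ γ → J γ = I γ := by
    intro γ hγ
    rw [hI γ hγ]
    show (1 / 2 : ℝ) * (∫ s in (0:ℝ)..γ, m s) = (1 / 2) * ∫ s in (0:ℝ)..γ, mmse s
    congr 1
    apply intervalIntegral.integral_congr
    intro s hs
    rw [Set.uIcc_of_le hγ] at hs
    exact hm_eq s hs.1
  -- the function Φ
  set Φ : ℝ → ℝ := fun t => ∫ ω, J (t * snr ω) with hΦ_def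
  have hmeas1 : ∀ t : ℝ, AEStronglyMeasurable (fun ω => J (t * snr ω)) volume :=
    fun t => (hJ_cont.measurable.comp (hsnr_meas.const_mul t)).aestronglyMeasurable
  have hint1 : ∀ t : ℝ, Integrable (fun ω => J (t * snr ω)) := by
    intro t
    refine Integrable.mono' ((hsnr_int.const_mul (|t| / 2))) (hmeas1 t) ?_
    refine Filter.Eventually.of_forall fun ω => ?_
    rw [Real.norm_eq_abs]
    calc |J (t * snr ω)| ≤ (1 / 2) * |t * snr ω| := hJ_bound _
      _ = |t| / 2 * snr ω := by
          rw [abs_mul, abs_of_nonneg (hsnr_nonneg ω)]; ring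
  have hΦderiv : ∀ t₀ : ℝ,
      HasDerivAt Φ (∫ ω, (1 / 2) * m (t₀ * snr ω) * snr ω) t₀ := by
    intro t₀
    have key := hasDerivAt_integral_of_dominated_loc_of_lip
      (F := fun t ω => J (t * snr ω))
      (F' := fun ω => (1 / 2) * m (t₀ * snr ω) * snr ω)
      (bound := fun ω => (1 / 2) * snr ω) (μ := volume) (x₀ := t₀)
      (Metric.ball_mem_nhds t₀ one_pos) (Filter.Eventually.of_forall fun t => hmeas1 t) (hint1 t₀)
      (((continuous_const.mul (hm_cont.comp (continuous_const.mul continuous_id))).measurable.comp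
          hsnr_meas |>.mul hsnr_meas).aestronglyMeasurable)
      ?_ (hsnr_int.const_mul (1 / 2)) ?_
    · exact key.2
    · refine Filter.Eventually.of_forall fun ω => ?_
      have hl : LipschitzWith (Real.nnabs ((1:ℝ) / 2 * snr ω))
          (fun t => J (t * snr ω)) := by
        refine LipschitzWith.of_dist_le_mul fun x y => ?_
        have h1 : |J (x * snr ω) - J (y * snr ω)| ≤ (1/2) * |x * snr ω - y * snr ω| :=
        hJ_lip _ _
        have h2 : |x * snr ω - y * snr ω| = snr ω * |x - y| := by
          rw [← sub_mul, abs_mul, abs_of_nonneg (hsnr_nonneg ω)]; ring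
        have h3 : ((Real.nnabs ((1:ℝ)/2 * snr ω)) : ℝ) = (1/2) * snr ω := by
          rw [Real.coe_nnabs, abs_of_nonneg (mul_nonneg (by norm_num) (hsnr_nonneg ω))]
        rw [Real.dist_eq, Real.dist_eq, h3]
        calc |J (x * snr ω) - J (y * snr ω)| ≤ (1/2) * (snr ω * |x - y|) := by
              rw [← h2]; exact h1
          _ = 1/2 * snr ω * |x - y| := by ring
      simpa using (hl.lipschitzOnWith (s := Metric.ball t₀ 1))
    · refine Filter.Eventually.of_forall fun ω => ?_
      have h1 := hJderiv (t₀ * snr ω)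
      have h2 : HasDerivAt (fun t : ℝ => t * snr ω) (snr ω) t₀ :=
        hasDerivAt_mul_const _
      have h3 := h1.comp t₀ h2
      exact h3
  have hΦ_diff : Differentiable ℝ Φ := fun t => (hΦderiv t).differentiableAt
  have hΦ_cont : Continuous Φ := hΦ_diff.continuous
  -- relate Φ' to the fixed point equation
  have hIfix : ∀ b, 0 < b →
      (∫ ω, (1 / 2) * m (η b * snr ω) * snr ω) = (1 / η b - 1) / (2 * b) := by
    intro b hb
    have harg : ∀ ω, (0:ℝ) ≤ η b * snr ω := fun ω =>
      mul_nonneg (hη_pos b hb).le (hsnr_nonneg ω)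
    have h1 : (∫ ω, (1 / 2) * m (η b * snr ω) * snr ω)
        = (1 / 2) * ∫ ω, snr ω * mmse (η b * snr ω) := by
      rw [← integral_const_mul]
      congr 1
      funext ω
      rw [hm_eq _ (harg ω)]; ring
    have h2 : (∫ ω, snr ω * mmse (η b * snr ω)) = (1 / η b - 1) / b := by
      have := hfix b hb
      field_simp at this ⊢
      linarith
    rw [h1, h2]
    field_simp
  -- the function g
  set g : ℝ → ℝ := fun b => b * Φ (η b) + (1 / 2) * (η b - 1 - Real.log (η b))
    with hg_def
  have hg_eq : ∀ b, 0 < b → Cjoint b = g b := by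
    intro b hb
    rw [hCjoint, hCsep]
    have h1 : (∫ ω, I (η b * snr ω)) = Φ (η b) := by
      refine integral_congr_ae (Filter.Eventually.of_forall fun ω => ?_)
      exact (hJI _ (mul_nonneg (hη_pos b hb).le (hsnr_nonneg ω))).symm
    rw [h1]
  have hgderiv : ∀ b, 0 < b → HasDerivAt g (Φ (η b)) b := by
    intro b hb
    have hηd : HasDerivAt η (deriv η b) b := (hη_diff b hb).hasDerivAt
    have h1 : HasDerivAt (fun x => Φ (η x))
        ((1 / η b - 1) / (2 * b) * deriv η b) b := by
      have := (hΦderiv (η b)).comp b hηd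
      rwa [hIfix b hb] at this
    have h2 : HasDerivAt (fun x => x * Φ (η x))
        (1 * Φ (η b) + b * ((1 / η b - 1) / (2 * b) * deriv η b)) b :=
      (hasDerivAt_id b).mul h1
    have h3 : HasDerivAt (fun x => Real.log (η x)) (deriv η b / η b) b :=
      hηd.log (ne_of_gt (hη_pos b hb))
    have h4 : HasDerivAt (fun x => (1 / 2) * (η x - 1 - Real.log (η x)))
        ((1 / 2) * (deriv η b - deriv η b / η b)) b :=
      ((hηd.sub_const 1).sub h3).const_mul (1 / 2)
    have h5 := h2.add h4
    refine h5.congr_deriv ?_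
    have hηb : η b ≠ 0 := ne_of_gt (hη_pos b hb)
    have hb' : b ≠ 0 := ne_of_gt hb
    field_simp
    ring
  -- continuity of Φ ∘ η on [0, ∞)
  have hφη_contOn : ContinuousOn (fun t => Φ (η t)) (Set.Ici 0) := by
    intro x hx
    rcases eq_or_lt_of_le (Set.mem_Ici.mp hx : (0:ℝ) ≤ x) with h0 | hpos
    · rw [← h0]
      exact (hΦ_cont.continuousAt).comp_continuousWithinAt hη_cont0
    · exact ((hΦ_cont.continuousAt).comp (hη_diff x hpos).continuousAt).continuousWithinAt
  -- the primitive R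
  set R : ℝ → ℝ := fun b => ∫ t in (0:ℝ)..b, Φ (η t) with hR_def
  have h_intble : ∀ b : ℝ, 0 ≤ b →
      IntervalIntegrable (fun t => Φ (η t)) volume 0 b := fun b hb =>
    (hφη_contOn.mono (by rw [Set.uIcc_of_le hb]; exact Set.Icc_subset_Ici_self)).intervalIntegrable
  have hRderiv : ∀ b, 0 < b → HasDerivAt R (Φ (η b)) b := by
    intro b hb
    have hcontAt : ContinuousAt (fun t => Φ (η t)) b :=
      (hΦ_cont.continuousAt).comp (hη_diff b hb).continuousAt
    refine intervalIntegral.integral_hasDerivAt_right (h_intble b hb.le) ?_ hcontAt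
    exact ⟨Set.Ioi 0, isOpen_Ioi.mem_nhds hb,
      ((hφη_contOn.mono Set.Ioi_subset_Ici_self).aestronglyMeasurable measurableSet_Ioi)⟩
  -- constancy of g - R on (0, β]
  intro β hβ
  have key : ∀ ε : ℝ, 0 < ε → ε ≤ β → g β - R β = g ε - R ε := by
    intro ε hε hεβ
    have main := eq_of_has_deriv_right_eq (a := ε) (b := β)
      (f := fun x => g x - g ε) (g := fun x => R x - R ε)
      (f' := fun x => Φ (η x))
      (fun x hx => ((hgderiv x (lt_of_lt_of_le hε hx.1)).sub_const _).hasDerivWithinAt)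
      (fun x hx => ((hRderiv x (lt_of_lt_of_le hε hx.1)).sub_const _).hasDerivWithinAt)
      (fun x hx => (((hgderiv x (lt_of_lt_of_le hε hx.1)).differentiableAt.continuousAt).sub
        continuousAt_const).continuousWithinAt)
      (fun x hx => (((hRderiv x (lt_of_lt_of_le hε hx.1)).differentiableAt.continuousAt).sub
        continuousAt_const).continuousWithinAt)
      (by simp)
    have h6 : g β - g ε = R β - R ε := main β ⟨hεβ, le_refl β⟩
    linarith
  -- limits as ε → 0⁺
  have hη_tendsto : Filter.Tendsto η (nhdsWithin 0 (Set.Ioi 0)) (nhds 1) := by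
    have h1 : Filter.Tendsto η (nhdsWithin 0 (Set.Ici 0)) (nhds 1) := by
      have := hη_cont0
      rw [ContinuousWithinAt, hη0] at this
      exact this
    exact h1.mono_left (nhdsWithin_mono _ Set.Ioi_subset_Ici_self)
  have hg_tendsto : Filter.Tendsto g (nhdsWithin 0 (Set.Ioi 0)) (nhds 0) := by
    have hid : Filter.Tendsto (fun ε : ℝ => ε) (nhdsWithin 0 (Set.Ioi 0)) (nhds 0) :=
      Filter.tendsto_id.mono_right nhdsWithin_le_nhds
    have hΦη : Filter.Tendsto (fun ε => Φ (η ε)) (nhdsWithin 0 (Set.Ioi 0)) (nhds (Φ 1)) :=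
      (hΦ_cont.continuousAt.tendsto).comp hη_tendsto
    have h1 := hid.mul hΦη
    have hlog : Filter.Tendsto (fun ε => Real.log (η ε)) (nhdsWithin 0 (Set.Ioi 0))
        (nhds (Real.log 1)) :=
      ((Real.continuousAt_log one_ne_zero).tendsto).comp hη_tendsto
    have h2 := (((hη_tendsto.sub_const 1).sub hlog).const_mul (1/2 : ℝ))
    have h3 := h1.add h2
    simpa [hg_def] using h3
  have hR_tendsto : Filter.Tendsto R (nhdsWithin 0 (Set.Ioi 0)) (nhds 0) := by
    have hint : IntegrableOn (fun t => Φ (η t)) (Set.uIcc 0 1) volume := by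
      rw [Set.uIcc_of_le zero_le_one]
      exact (hφη_contOn.mono (fun x hx => hx.1)).integrableOn_Icc
    have hcont := intervalIntegral.continuousOn_primitive_interval (a := 0) (b := 1) hint
    have h0mem : (0:ℝ) ∈ Set.uIcc 0 1 := Set.left_mem_uIcc
    have hcwa := hcont 0 h0mem
    have hR0 : (∫ t in (0:ℝ)..(0:ℝ), Φ (η t)) = 0 := intervalIntegral.integral_same
    rw [ContinuousWithinAt, hR0] at hcwa
    refine hcwa.mono_left ?_
    rw [← nhdsWithin_Ioc_eq_nhdsGT (zero_lt_one)]
    refine nhdsWithin_mono _ ?_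
    rw [Set.uIcc_of_le zero_le_one]
    exact Set.Ioc_subset_Icc_self
  -- conclude g β = R β
  have hgR : g β = R β := by
    have hconst : ∀ᶠ ε in nhdsWithin 0 (Set.Ioi 0), g ε - R ε = g β - R β := by
      have hmem : Set.Ioc (0:ℝ) β ∈ nhdsWithin 0 (Set.Ioi 0) := by
        rw [← nhdsWithin_Ioc_eq_nhdsGT hβ]
        exact self_mem_nhdsWithin
      filter_upwards [hmem] with ε hε
      exact (key ε hε.1 hε.2).symm
    have h1 : Filter.Tendsto (fun ε => g ε - R ε) (nhdsWithin 0 (Set.Ioi 0))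
        (nhds 0) := by simpa using hg_tendsto.sub hR_tendsto
    have h2 : Filter.Tendsto (fun ε => g ε - R ε) (nhdsWithin 0 (Set.Ioi 0))
        (nhds (g β - R β)) :=
      Filter.Tendsto.congr' (Filter.EventuallyEq.symm hconst) tendsto_const_nhds
    have := tendsto_nhds_unique h1 h2
    linarith
  -- final identification of the right hand side
  have hrhs : (∫ β' in (0:ℝ)..β, Csep β' / β') = R β := by
    refine intervalIntegral.integral_congr_ae ?_
    refine Filter.Eventually.of_forall fun x hx => ?_
    rw [Set.uIoc_of_le hβ.le] at hx
    have hx0 : 0 < x := hx.1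
    have h1 : (∫ ω, I (η x * snr ω)) = Φ (η x) := by
      refine integral_congr_ae (Filter.Eventually.of_forall fun ω => ?_)
      exact (hJI _ (mul_nonneg (hη_pos x hx0).le (hsnr_nonneg ω))).symm
    rw [hCsep, h1, mul_comm, mul_div_assoc, div_self (ne_of_gt hx0), mul_one]
  rw [hg_eq β hβ, hgR, hrhs]
end

section
/- Let snr be a nonnegative real random variable with finite mean. Let mmse : [0,∞) → ℝ be a continuous function with 0 ≤ mmse(γ) ≤ 1 for all γ ≥ 0, and let I : [0,∞) → ℝ be defined by I(γ) = (1/2) ∫₀^γ mmse(s) ds. Suppose η : (0,∞) → (0,1] is differentiable and satisfies 1/η(β) = 1 + β·E[snr · mmse(η(β)·snr)] for every β > 0. Define C_sep(β) = β·E[I(η(β)·snr)] and C_joint(β) = C_sep(β) + (1/2)(η(β) − 1 − ln η(β)). Then C_joint is differentiable on (0,∞) and β · C_joint′(β) = C_sep(β) for every β > 0. -/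
open MeasureTheory Real

/-- For the optimal multiuser efficiency `η` solving the fixed-point
equation `1/η(β) = 1 + β·E[snr · mmse(η(β)·snr)]`, the joint-decoding spectral efficiency
`C_joint` is differentiable on `(0,∞)` and satisfies `β · C_joint′(β) = C_sep(β)`. -/
theorem cdma_joint_deriv_eq_sep
    {Ω : Type*} [MeasureSpace Ω] [IsProbabilityMeasure (volume : Measure Ω)]
    (snr : Ω → ℝ) (hsnr_meas : Measurable snr)
    (hsnr_nonneg : ∀ ω, 0 ≤ snr ω) (hsnr_int : Integrable snr)
    (mmse : ℝ → ℝ) (hmmse_cont : ContinuousOn mmse (Set.Ici 0))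
    (hmmse_nonneg : ∀ γ, 0 ≤ γ → 0 ≤ mmse γ)
    (hmmse_le_one : ∀ γ, 0 ≤ γ → mmse γ ≤ 1)
    (I : ℝ → ℝ) (hI : ∀ γ, 0 ≤ γ → I γ = (1 / 2) * ∫ s in (0:ℝ)..γ, mmse s)
    (η : ℝ → ℝ)
    (hη_diff : ∀ β, 0 < β → DifferentiableAt ℝ η β)
    (hη_pos : ∀ β, 0 < β → 0 < η β) (hη_le_one : ∀ β, 0 < β → η β ≤ 1)
    (hfix : ∀ β, 0 < β →
      1 / η β = 1 + β * ∫ ω, snr ω * mmse (η β * snr ω))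
    (Csep Cjoint : ℝ → ℝ)
    (hCsep : ∀ β, Csep β = β * ∫ ω, I (η β * snr ω))
    (hCjoint : ∀ β, Cjoint β = Csep β + (1 / 2) * (η β - 1 - Real.log (η β))) :
    ∀ β, 0 < β → DifferentiableAt ℝ Cjoint β ∧ β * deriv Cjoint β = Csep β := by
  -- extended mmse, continuous on all of ℝ
  set g : ℝ → ℝ := fun s => mmse (max s 0) with hg_def
  have hmax : Continuous fun s : ℝ => max s 0 := by continuity
  have hg_cont : Continuous g := by
    apply hmmse_cont.comp_continuous hmax
    intro x; exact Set.mem_Ici.mpr (le_max_right x 0)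
  have hg_nonneg : ∀ s, 0 ≤ g s := fun s => hmmse_nonneg _ (le_max_right _ _)
  have hg_le_one : ∀ s, g s ≤ 1 := fun s => hmmse_le_one _ (le_max_right _ _)
  have hg_eq : ∀ s, 0 ≤ s → g s = mmse s := by
    intro s hs; simp [hg_def, max_eq_left hs]
  -- extended I
  set Iext : ℝ → ℝ := fun γ => (1 / 2) * ∫ s in (0:ℝ)..γ, g s with hIext_def
  have hIext_eq : ∀ γ, 0 ≤ γ → Iext γ = I γ := by
    intro γ hγ
    rw [hI γ hγ]
    show (1 / 2) * (∫ s in (0:ℝ)..γ, g s) = (1 / 2) * ∫ s in (0:ℝ)..γ, mmse s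
    congr 1
    apply intervalIntegral.integral_congr
    intro s hs
    rw [Set.uIcc_of_le hγ] at hs
    exact hg_eq s hs.1
  have hIext_deriv : ∀ γ : ℝ, HasDerivAt Iext ((1 / 2) * g γ) γ := by
    intro γ
    exact (intervalIntegral.integral_hasDerivAt_right (hg_cont.intervalIntegrable 0 γ)
      hg_cont.stronglyMeasurable.stronglyMeasurableAtFilter hg_cont.continuousAt).const_mul
      (1 / 2)
  have hIext_diff : Differentiable ℝ Iext := fun γ => (hIext_deriv γ).differentiableAt
  have hIext_cont : Continuous Iext := hIext_diff.continuous
  -- |Iext y| ≤ |y|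
  have hIext_bound : ∀ y : ℝ, |Iext y| ≤ |y| := by
    intro y
    have h1 : ‖∫ s in (0:ℝ)..y, g s‖ ≤ 1 * |y - 0| := by
      apply intervalIntegral.norm_integral_le_of_norm_le_const
      intro s _
      rw [Real.norm_eq_abs, abs_le]
      exact ⟨by linarith [hg_nonneg s], hg_le_one s⟩
    rw [hIext_def]
    simp only [abs_mul]
    rw [Real.norm_eq_abs] at h1
    have : |(1:ℝ)/2| = 1/2 := by norm_num
    rw [this]
    rw [sub_zero, one_mul] at h1
    nlinarith [abs_nonneg y, abs_nonneg (∫ s in (0:ℝ)..y, g s)]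
  -- the parametric integral G
  set G : ℝ → ℝ := fun u => ∫ ω, Iext (u * snr ω) with hG_def
  -- derivative of G
  have hG_deriv : ∀ u₀ : ℝ,
      HasDerivAt G (∫ ω, (1 / 2) * g (u₀ * snr ω) * snr ω) u₀ := by
    intro u₀
    have key := hasDerivAt_integral_of_dominated_loc_of_deriv_le (μ := (volume : Measure Ω))
      (F := fun x ω => Iext (x * snr ω))
      (F' := fun x ω => (1 / 2) * g (x * snr ω) * snr ω)
      (x₀ := u₀) (bound := snr) (s := Metric.ball u₀ 1) (Metric.ball_mem_nhds u₀ one_pos)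
      (Filter.Eventually.of_forall fun x =>
        (hIext_cont.measurable.comp (measurable_const.mul hsnr_meas)).aestronglyMeasurable)
      ?_ ?_ ?_ hsnr_int ?_
    · exact key.2
    · -- integrability of F u₀
      apply Integrable.mono (hsnr_int.const_mul (|u₀|))
      · exact (hIext_cont.measurable.comp (measurable_const.mul hsnr_meas)).aestronglyMeasurable
      · apply Filter.Eventually.of_forall
        intro ω
        rw [Real.norm_eq_abs, Real.norm_eq_abs]
        calc |Iext (u₀ * snr ω)| ≤ |u₀ * snr ω| := hIext_bound _
          _ = |u₀| * snr ω := by rw [abs_mul, abs_of_nonneg (hsnr_nonneg ω)]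
          _ ≤ |(|u₀| * snr ω)| := le_abs_self _
    · exact (((hg_cont.measurable.comp (measurable_const.mul hsnr_meas)).const_mul _).mul
        hsnr_meas).aestronglyMeasurable
    · apply Filter.Eventually.of_forall
      intro ω x _
      rw [Real.norm_eq_abs, abs_mul, abs_mul, abs_of_nonneg (hsnr_nonneg ω)]
      have h1 : |(1:ℝ)/2| = 1/2 := by norm_num
      have h2 : |g (x * snr ω)| ≤ 1 := by
        rw [abs_of_nonneg (hg_nonneg _)]; exact hg_le_one _
      rw [h1]
      nlinarith [mul_le_mul_of_nonneg_right h2 (hsnr_nonneg ω), hsnr_nonneg ω,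
        abs_nonneg (g (x * snr ω))]
    · apply Filter.Eventually.of_forall
      intro ω x _
      have h1 : HasDerivAt (fun x : ℝ => x * snr ω) (snr ω) x := hasDerivAt_mul_const _
      have := (hIext_deriv (x * snr ω)).comp x h1; exact this
  -- now the main argument
  intro β hβ
  set e := η β with he_def
  have he_pos : 0 < e := hη_pos β hβ
  have he_ne : e ≠ 0 := ne_of_gt he_pos
  have hβ_ne : β ≠ 0 := ne_of_gt hβ
  set η' := deriv η β with hη'_def
  have hηd : HasDerivAt η η' β := (hη_diff β hβ).hasDerivAt
  -- set M := E[snr·mmse(e·snr)]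
  set M := ∫ ω, snr ω * mmse (e * snr ω) with hM_def
  have hfixβ : 1 / e = 1 + β * M := hfix β hβ
  -- G'(e) = (1/2) M
  have hG'e : (∫ ω, (1 / 2) * g (e * snr ω) * snr ω) = (1 / 2) * M := by
    rw [hM_def, ← integral_const_mul]
    apply integral_congr_ae
    apply Filter.Eventually.of_forall
    intro ω
    have hge : g (e * snr ω) = mmse (e * snr ω) :=
      hg_eq _ (mul_nonneg he_pos.le (hsnr_nonneg ω))
    show 1 / 2 * g (e * snr ω) * snr ω = 1 / 2 * (snr ω * mmse (e * snr ω))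
    rw [hge]; ring
  -- Csep x = x * G (η x) for x > 0
  have hCsep_eq : ∀ x, 0 < x → Csep x = x * G (η x) := by
    intro x hx
    rw [hCsep x, hG_def]
    congr 1
    apply integral_congr_ae
    apply Filter.Eventually.of_forall
    intro ω
    exact (hIext_eq _ (mul_nonneg (hη_pos x hx).le (hsnr_nonneg ω))).symm
  -- local form of Cjoint
  set h : ℝ → ℝ := fun x => x * G (η x) + (1 / 2) * (η x - 1 - Real.log (η x)) with hh_def
  have h_eventually : Cjoint =ᶠ[nhds β] h := by
    have hmem : Set.Ioi (0:ℝ) ∈ nhds β := Ioi_mem_nhds hβ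
    filter_upwards [hmem] with x hx
    rw [hCjoint x, hh_def, hCsep_eq x hx]
  -- derivative of h at β
  have hGe : HasDerivAt G ((1 / 2) * M) e := by
    have := hG_deriv e
    rwa [hG'e] at this
  have hcomp : HasDerivAt (fun x => G (η x)) ((1 / 2) * M * η') β := hGe.comp β hηd
  have hprod : HasDerivAt (fun x => x * G (η x))
      (1 * G (η β) + β * ((1 / 2) * M * η')) β := (hasDerivAt_id β).mul hcomp
  have hlog : HasDerivAt (fun x => Real.log (η x)) (e⁻¹ * η') β :=
    (Real.hasDerivAt_log he_ne).comp β hηd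
  have hlin : HasDerivAt (fun x => (1 / 2) * (η x - 1 - Real.log (η x)))
      ((1 / 2) * (η' - 0 - e⁻¹ * η')) β :=
    (((hηd.sub_const 1).sub hlog).const_mul (1 / 2)).congr_deriv (by ring)
  have hhd : HasDerivAt h
      (1 * G (η β) + β * ((1 / 2) * M * η') + (1 / 2) * (η' - 0 - e⁻¹ * η')) β :=
    hprod.add hlin
  have hCd : HasDerivAt Cjoint
      (1 * G (η β) + β * ((1 / 2) * M * η') + (1 / 2) * (η' - 0 - e⁻¹ * η')) β :=
    hhd.congr_of_eventuallyEq h_eventually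
  refine ⟨hCd.differentiableAt, ?_⟩
  rw [hCd.deriv, hCsep_eq β hβ, ← he_def]
  have hβMe : β * M * e = 1 - e := by
    have h := hfixβ
    field_simp at h
    linarith
  field_simp
  linear_combination η' * hβMe
end

section
/- Fix ξ > 0 and snr > 0. Let X be a real random variable with E[X] = 0, E[X²] = 1 and finite moments of all orders, and for each nonnegative integer i define qᵢ(z) = E[ Xⁱ · √(ξ/(2π)) · exp(−(ξ/2)(z − √snr · X)²) ] for z ∈ ℝ. Then q₀(z) > 0 for every z, and the decision function z ↦ q₁(z)/q₀(z) is strictly monotone increasing on ℝ. -/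
open MeasureTheory Real

/-- The posterior-mean decision function `z ↦ q₁(z)/q₀(z)` of a single-user
Gaussian channel with inverse noise variance `ξ` and signal-to-noise ratio `snr` is well
defined (`q₀ > 0`) and strictly monotone increasing. -/
theorem decision_function_strictMono
    {Ω : Type*} [MeasureSpace Ω] [IsProbabilityMeasure (volume : Measure Ω)]
    (ξ snr : ℝ) (hξ : 0 < ξ) (hsnr : 0 < snr)
    (X : Ω → ℝ) (hX_meas : Measurable X)
    (hX_moments : ∀ n : ℕ, Integrable (fun ω => X ω ^ n))
    (hX_mean : ∫ ω, X ω = 0) (hX_var : ∫ ω, X ω ^ 2 = 1)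
    (q : ℕ → ℝ → ℝ)
    (hq : ∀ i z, q i z =
      ∫ ω, X ω ^ i * Real.sqrt (ξ / (2 * π)) *
        Real.exp (-(ξ / 2) * (z - Real.sqrt snr * X ω) ^ 2)) :
    (∀ z, 0 < q 0 z) ∧ StrictMono (fun z => q 1 z / q 0 z) := by
  have hπ : (0:ℝ) < π := Real.pi_pos
  set c : ℝ := Real.sqrt (ξ / (2 * π)) with hc_def
  have hc : 0 < c := Real.sqrt_pos.2 (by positivity)
  set s : ℝ := Real.sqrt snr with hs_def
  have hs : 0 < s := Real.sqrt_pos.2 hsnr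
  set g : ℝ → ℝ → ℝ := fun z x => c * Real.exp (-(ξ/2) * (z - s * x)^2) with hg_def
  have hg_pos : ∀ z x, 0 < g z x := fun z x => by positivity
  have hg_le : ∀ z x, g z x ≤ c := by
    intro z x
    have h1 : Real.exp (-(ξ/2) * (z - s*x)^2) ≤ 1 := by
      rw [Real.exp_le_one_iff]
      nlinarith [sq_nonneg (z - s*x)]
    calc g z x = c * Real.exp (-(ξ/2) * (z - s*x)^2) := rfl
    _ ≤ c * 1 := by nlinarith
    _ = c := mul_one c
  have hg_meas : ∀ z, Measurable fun x => g z x := by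
    intro z
    apply Measurable.const_mul
    exact Real.measurable_exp.comp (by fun_prop)
  -- integrability of the basic integrands
  have hInt : ∀ (i : ℕ) (z : ℝ), Integrable (fun ω => X ω ^ i * g z (X ω)) := by
    intro i z
    apply Integrable.mono' (((hX_moments i).abs).const_mul c)
    · exact ((hX_meas.pow_const i).mul ((hg_meas z).comp hX_meas)).aestronglyMeasurable
    · filter_upwards with ω
      rw [norm_mul, Real.norm_eq_abs, Real.norm_eq_abs, abs_of_pos (hg_pos z (X ω))]
      calc |X ω ^ i| * g z (X ω) ≤ |X ω ^ i| * c :=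
            mul_le_mul_of_nonneg_left (hg_le z (X ω)) (abs_nonneg _)
      _ = c * |X ω ^ i| := mul_comm _ _
  have hq' : ∀ i z, q i z = ∫ ω, X ω ^ i * g z (X ω) := by
    intro i z
    rw [hq]
    congr 1
    funext ω
    rw [hg_def]
    ring
  -- positivity of q 0
  have hq0 : ∀ z, 0 < q 0 z := by
    intro z
    rw [hq' 0 z]
    rw [integral_pos_iff_support_of_nonneg (fun ω => by positivity) (hInt 0 z)]
    have : Function.support (fun ω => X ω ^ 0 * g z (X ω)) = Set.univ := by
      ext ω
      simp only [Function.mem_support, Set.mem_univ, iff_true]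
      positivity
    rw [this]
    simp
  refine ⟨hq0, ?_⟩
  intro z1 z2 hz
  simp only
  rw [div_lt_div_iff₀ (hq0 z1) (hq0 z2)]
  -- key quantities
  set μ : Measure Ω := volume with hμ_def
  set k : ℝ := ξ * s * (z2 - z1) with hk_def
  have hk : 0 < k := by
    apply mul_pos (mul_pos hξ hs)
    linarith
  -- pointwise identity
  have hkey : ∀ x y : ℝ, (x - y) * (g z2 x * g z1 y - g z1 x * g z2 y)
      = (c^2 * Real.exp (-(ξ/2)*(z1 - s*x)^2 + -(ξ/2)*(z2 - s*y)^2)) *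
        ((x - y) * (Real.exp (k*(x-y)) - 1)) := by
    intro x y
    have h1 : (-(ξ/2)*(z2 - s*x)^2) + (-(ξ/2)*(z1 - s*y)^2)
        = ((-(ξ/2)*(z1 - s*x)^2) + (-(ξ/2)*(z2 - s*y)^2)) + k*(x-y) := by
      rw [hk_def]; ring
    have h2 : g z2 x * g z1 y = c^2 *
        (Real.exp (-(ξ/2)*(z1 - s*x)^2 + -(ξ/2)*(z2 - s*y)^2) * Real.exp (k*(x-y))) := by
      rw [hg_def]
      simp only
      rw [← Real.exp_add, ← h1, Real.exp_add]
      ring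
    have h3 : g z1 x * g z2 y = c^2 *
        Real.exp (-(ξ/2)*(z1 - s*x)^2 + -(ξ/2)*(z2 - s*y)^2) := by
      rw [hg_def]
      simp only
      rw [Real.exp_add]
      ring
    rw [h2, h3]
    ring
  -- sign lemma
  have hsgn : ∀ t : ℝ, 0 ≤ t * (Real.exp (k*t) - 1) := by
    intro t
    rcases lt_trichotomy t 0 with h | h | h
    · have : Real.exp (k*t) < 1 := by
        rw [Real.exp_lt_one_iff]; nlinarith
      nlinarith
    · simp [h]
    · have : 1 < Real.exp (k*t) := by
        rw [show (1:ℝ) = Real.exp 0 from (Real.exp_zero).symm]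
        exact Real.exp_lt_exp.2 (by nlinarith)
      nlinarith
  have hsgn' : ∀ t : ℝ, t ≠ 0 → 0 < t * (Real.exp (k*t) - 1) := by
    intro t ht
    rcases lt_trichotomy t 0 with h | h | h
    · have : Real.exp (k*t) < 1 := by
        rw [Real.exp_lt_one_iff]; nlinarith
      nlinarith
    · exact absurd h ht
    · have : 1 < Real.exp (k*t) := by
        rw [show (1:ℝ) = Real.exp 0 from (Real.exp_zero).symm]
        exact Real.exp_lt_exp.2 (by nlinarith)
      nlinarith
  -- the symmetrized integrand on the product space
  set H : Ω × Ω → ℝ := fun p =>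
    (X p.1 - X p.2) * (g z2 (X p.1) * g z1 (X p.2) - g z1 (X p.1) * g z2 (X p.2)) with hH_def
  have hH_nonneg : ∀ p, 0 ≤ H p := by
    intro p
    rw [hH_def]
    simp only
    rw [hkey]
    have := hsgn (X p.1 - X p.2)
    positivity
  -- integrability of H
  have hf1 : Integrable (fun p : Ω × Ω => (X p.1 ^ 1 * g z2 (X p.1)) * (X p.2 ^ 0 * g z1 (X p.2)))
      (μ.prod μ) := (hInt 1 z2).mul_prod (hInt 0 z1)
  have hf2 : Integrable (fun p : Ω × Ω => (X p.1 ^ 1 * g z1 (X p.1)) * (X p.2 ^ 0 * g z2 (X p.2)))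
      (μ.prod μ) := (hInt 1 z1).mul_prod (hInt 0 z2)
  have hf3 : Integrable (fun p : Ω × Ω => (X p.1 ^ 0 * g z2 (X p.1)) * (X p.2 ^ 1 * g z1 (X p.2)))
      (μ.prod μ) := (hInt 0 z2).mul_prod (hInt 1 z1)
  have hf4 : Integrable (fun p : Ω × Ω => (X p.1 ^ 0 * g z1 (X p.1)) * (X p.2 ^ 1 * g z2 (X p.2)))
      (μ.prod μ) := (hInt 0 z1).mul_prod (hInt 1 z2)
  have hHeq : H = fun p : Ω × Ω =>
      (X p.1 ^ 1 * g z2 (X p.1)) * (X p.2 ^ 0 * g z1 (X p.2))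
      - (X p.1 ^ 1 * g z1 (X p.1)) * (X p.2 ^ 0 * g z2 (X p.2))
      - (X p.1 ^ 0 * g z2 (X p.1)) * (X p.2 ^ 1 * g z1 (X p.2))
      + (X p.1 ^ 0 * g z1 (X p.1)) * (X p.2 ^ 1 * g z2 (X p.2)) := by
    funext p
    rw [hH_def]
    simp only [pow_one, pow_zero, one_mul]
    ring
  have hHint : Integrable H (μ.prod μ) := by
    rw [hHeq]
    exact ((hf1.sub hf2).sub hf3).add hf4
  -- value of ∫ H
  have hi2 : Integrable (fun p : Ω × Ω =>
      (X p.1 ^ 1 * g z2 (X p.1)) * (X p.2 ^ 0 * g z1 (X p.2))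
      - (X p.1 ^ 1 * g z1 (X p.1)) * (X p.2 ^ 0 * g z2 (X p.2))) (μ.prod μ) := hf1.sub hf2
  have hi3 : Integrable (fun p : Ω × Ω =>
      (X p.1 ^ 1 * g z2 (X p.1)) * (X p.2 ^ 0 * g z1 (X p.2))
      - (X p.1 ^ 1 * g z1 (X p.1)) * (X p.2 ^ 0 * g z2 (X p.2))
      - (X p.1 ^ 0 * g z2 (X p.1)) * (X p.2 ^ 1 * g z1 (X p.2))) (μ.prod μ) := hi2.sub hf3
  have hHval : ∫ p, H p ∂(μ.prod μ) = 2 * (q 1 z2 * q 0 z1 - q 1 z1 * q 0 z2) := by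
    rw [hHeq]
    rw [integral_add hi3 hf4, integral_sub hi2 hf3, integral_sub hf1 hf2]
    rw [integral_prod_mul (fun ω => X ω ^ 1 * g z2 (X ω)) (fun ω => X ω ^ 0 * g z1 (X ω)),
      integral_prod_mul (fun ω => X ω ^ 1 * g z1 (X ω)) (fun ω => X ω ^ 0 * g z2 (X ω)),
      integral_prod_mul (fun ω => X ω ^ 0 * g z2 (X ω)) (fun ω => X ω ^ 1 * g z1 (X ω)),
      integral_prod_mul (fun ω => X ω ^ 0 * g z1 (X ω)) (fun ω => X ω ^ 1 * g z2 (X ω))]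
    rw [hq' 1 z2, hq' 1 z1, hq' 0 z1, hq' 0 z2]
    ring
  -- the set where X differs has positive measure
  have hS : 0 < (μ.prod μ) {p : Ω × Ω | X p.1 ≠ X p.2} := by
    by_contra hcon
    push_neg at hcon
    have hS0 : (μ.prod μ) {p : Ω × Ω | X p.1 ≠ X p.2} = 0 := le_antisymm hcon zero_le
    have hae : ∀ᵐ p ∂(μ.prod μ), p ∉ {p : Ω × Ω | X p.1 ≠ X p.2} := by
      rwa [← measure_eq_zero_iff_ae_notMem]
    have hzero : ∫ p, (X p.1 - X p.2)^2 ∂(μ.prod μ) = 0 := by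
      rw [show (0:ℝ) = ∫ _ : Ω × Ω, (0:ℝ) ∂(μ.prod μ) from (integral_zero _ _).symm]
      apply integral_congr_ae
      filter_upwards [hae] with p hp
      simp only [Set.mem_setOf_eq, not_not] at hp
      rw [hp]
      ring
    have ha : Integrable (fun p : Ω × Ω => (X p.1 ^ 2) * (X p.2 ^ 0)) (μ.prod μ) :=
      (hX_moments 2).mul_prod (hX_moments 0)
    have hb : Integrable (fun p : Ω × Ω => (X p.1 ^ 1) * (X p.2 ^ 1)) (μ.prod μ) :=
      (hX_moments 1).mul_prod (hX_moments 1)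
    have hcc : Integrable (fun p : Ω × Ω => (X p.1 ^ 0) * (X p.2 ^ 2)) (μ.prod μ) :=
      (hX_moments 0).mul_prod (hX_moments 2)
    have hexp : (fun p : Ω × Ω => (X p.1 - X p.2)^2) = fun p : Ω × Ω =>
        (X p.1 ^ 2) * (X p.2 ^ 0) - 2 * ((X p.1 ^ 1) * (X p.2 ^ 1))
        + (X p.1 ^ 0) * (X p.2 ^ 2) := by
      funext p
      simp only [pow_one, pow_zero]
      ring
    have hone : ∫ ω, X ω ^ 0 ∂μ = 1 := by
      simp
    have hpow1 : ∫ ω, X ω ^ 1 ∂μ = 0 := by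
      simpa using hX_mean
    have hb2 : Integrable (fun p : Ω × Ω => 2 * ((X p.1 ^ 1) * (X p.2 ^ 1))) (μ.prod μ) :=
      hb.const_mul 2
    have hab : Integrable (fun p : Ω × Ω =>
        (X p.1 ^ 2) * (X p.2 ^ 0) - 2 * ((X p.1 ^ 1) * (X p.2 ^ 1))) (μ.prod μ) := ha.sub hb2
    have hval2 : ∫ p, (X p.1 - X p.2)^2 ∂(μ.prod μ) = 2 := by
      rw [hexp, integral_add hab hcc, integral_sub ha hb2,
        integral_const_mul,
        integral_prod_mul (fun ω => X ω ^ 2) (fun ω => X ω ^ 0),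
        integral_prod_mul (fun ω => X ω ^ 1) (fun ω => X ω ^ 1),
        integral_prod_mul (fun ω => X ω ^ 0) (fun ω => X ω ^ 2),
        hone, hpow1, hX_var]
      norm_num
    rw [hzero] at hval2
    norm_num at hval2
  -- strict positivity of ∫ H
  have hHpos : 0 < ∫ p, H p ∂(μ.prod μ) := by
    rw [integral_pos_iff_support_of_nonneg hH_nonneg hHint]
    refine lt_of_lt_of_le hS (measure_mono ?_)
    intro p hp
    simp only [Set.mem_setOf_eq] at hp
    have hd : X p.1 - X p.2 ≠ 0 := sub_ne_zero_of_ne hp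
    have h1 := hsgn' (X p.1 - X p.2) hd
    simp only [Function.mem_support]
    rw [hH_def]
    simp only
    rw [hkey]
    positivity
  rw [hHval] at hHpos
  linarith
end

section
/- Fix ξ > 0 and snr > 0. Let X be a real random variable with finite moments of all orders, and for each nonnegative integer i define qᵢ(z) = E[ Xⁱ · √(ξ/(2π)) · exp(−(ξ/2)(z − √snr · X)²) ] for z ∈ ℝ. Then for every i, the function qᵢ is differentiable on ℝ and qᵢ′(z) = ξ·√snr · q_{i+1}(z) − ξ·z · qᵢ(z). -/
open MeasureTheory Real

/-- The Gaussian-weighted posterior moments `qᵢ` are differentiable with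
`qᵢ′(z) = ξ·√snr·q_{i+1}(z) − ξ·z·qᵢ(z)`. -/
theorem q_hasDerivAt
    {Ω : Type*} [MeasureSpace Ω] [IsProbabilityMeasure (volume : Measure Ω)]
    (ξ snr : ℝ) (hξ : 0 < ξ) (hsnr : 0 < snr)
    (X : Ω → ℝ) (hX_meas : Measurable X)
    (hX_moments : ∀ n : ℕ, Integrable (fun ω => X ω ^ n))
    (q : ℕ → ℝ → ℝ)
    (hq : ∀ i z, q i z =
      ∫ ω, X ω ^ i * Real.sqrt (ξ / (2 * π)) *
        Real.exp (-(ξ / 2) * (z - Real.sqrt snr * X ω) ^ 2)) :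
    ∀ (i : ℕ) (z : ℝ),
      HasDerivAt (q i) (ξ * Real.sqrt snr * q (i + 1) z - ξ * z * q i z) z := by
  intro i z
  set c : ℝ := Real.sqrt (ξ / (2 * π)) with hc
  have hc_nonneg : 0 ≤ c := Real.sqrt_nonneg _
  set a : ℝ := Real.sqrt snr with ha
  have ha_nonneg : 0 ≤ a := Real.sqrt_nonneg _
  -- pointwise family
  set g : ℕ → ℝ → Ω → ℝ := fun n t ω =>
    X ω ^ n * c * Real.exp (-(ξ / 2) * (t - a * X ω) ^ 2) with hg
  have hmeasE : ∀ t : ℝ,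
      Measurable (fun ω => Real.exp (-(ξ / 2) * (t - a * X ω) ^ 2)) := by
    intro t
    exact (((measurable_const.sub (hX_meas.const_mul a)).pow_const 2).const_mul
      (-(ξ / 2))).exp
  have hgmeas : ∀ (n : ℕ) (t : ℝ), AEStronglyMeasurable (g n t) volume := by
    intro n t
    exact (((hX_meas.pow_const n).mul_const c).mul (hmeasE t)).aestronglyMeasurable
  have habs : ∀ n : ℕ, Integrable (fun ω => |X ω| ^ n) := by
    intro n
    simpa [abs_pow] using (hX_moments n).abs
  have hexp_le : ∀ (t : ℝ) (ω : Ω),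
      Real.exp (-(ξ / 2) * (t - a * X ω) ^ 2) ≤ 1 := by
    intro t ω
    apply Real.exp_le_one_iff.mpr
    have : 0 ≤ ξ / 2 * (t - a * X ω) ^ 2 :=
      mul_nonneg (le_of_lt (half_pos hξ)) (sq_nonneg _)
    nlinarith
  have hexp_pos : ∀ (t : ℝ) (ω : Ω),
      0 < Real.exp (-(ξ / 2) * (t - a * X ω) ^ 2) := fun t ω => Real.exp_pos _
  have hgint : ∀ (n : ℕ) (t : ℝ), Integrable (g n t) := by
    intro n t
    refine Integrable.mono ((habs n).const_mul c) (hgmeas n t) ?_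
    filter_upwards with ω
    have h1 : ‖g n t ω‖ = |X ω| ^ n * c * Real.exp (-(ξ / 2) * (t - a * X ω) ^ 2) := by
      simp [hg, abs_mul, abs_pow, abs_of_nonneg hc_nonneg,
        abs_of_pos (hexp_pos t ω)]
    rw [h1]
    have h2 : |X ω| ^ n * c * Real.exp (-(ξ / 2) * (t - a * X ω) ^ 2)
        ≤ |X ω| ^ n * c * 1 :=
      mul_le_mul_of_nonneg_left (hexp_le t ω)
        (mul_nonneg (pow_nonneg (abs_nonneg _) n) hc_nonneg)
    calc |X ω| ^ n * c * Real.exp (-(ξ / 2) * (t - a * X ω) ^ 2)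
        ≤ |X ω| ^ n * c * 1 := h2
      _ ≤ ‖c * |X ω| ^ n‖ := by
          rw [Real.norm_eq_abs, abs_of_nonneg
            (mul_nonneg hc_nonneg (pow_nonneg (abs_nonneg _) n)), mul_one, mul_comm]
  -- derivative family
  set g' : ℝ → Ω → ℝ := fun t ω =>
    X ω ^ i * c * (Real.exp (-(ξ / 2) * (t - a * X ω) ^ 2) * (-ξ * (t - a * X ω)))
    with hg'
  have hg'meas : AEStronglyMeasurable (g' z) volume := by
    refine (((hX_meas.pow_const i).mul_const c).mul
      ((hmeasE z).mul ((measurable_const.sub (hX_meas.const_mul a)).const_mul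
        (-ξ)))).aestronglyMeasurable
  set bound : Ω → ℝ := fun ω =>
    c * ξ * ((|z| + 1) * |X ω| ^ i + a * |X ω| ^ (i + 1)) with hbound
  have hbound_int : Integrable bound := by
    exact (Integrable.add ((habs i).const_mul (|z| + 1))
      ((habs (i + 1)).const_mul a)).const_mul (c * ξ)
  have h_bound : ∀ᵐ ω : Ω, ∀ t ∈ Metric.ball z 1, ‖g' t ω‖ ≤ bound ω := by
    filter_upwards with ω t ht
    have htz : |t| ≤ |z| + 1 := by
      have := Metric.mem_ball.mp ht
      rw [Real.dist_eq] at this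
      have := abs_sub_abs_le_abs_sub t z
      linarith [abs_sub_abs_le_abs_sub t z, le_of_lt (Real.dist_eq t z ▸ Metric.mem_ball.mp ht)]
    have h1 : ‖g' t ω‖ = |X ω| ^ i * c *
        (Real.exp (-(ξ / 2) * (t - a * X ω) ^ 2) * (ξ * |t - a * X ω|)) := by
      simp [hg', abs_mul, abs_pow, abs_of_nonneg hc_nonneg,
        abs_of_pos (hexp_pos t ω), abs_of_pos hξ]
    rw [h1]
    have h2 : Real.exp (-(ξ / 2) * (t - a * X ω) ^ 2) * (ξ * |t - a * X ω|)
        ≤ 1 * (ξ * |t - a * X ω|) :=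
      mul_le_mul_of_nonneg_right (hexp_le t ω)
        (mul_nonneg (le_of_lt hξ) (abs_nonneg _))
    have h3 : |t - a * X ω| ≤ (|z| + 1) + a * |X ω| := by
      calc |t - a * X ω| ≤ |t| + |a * X ω| := abs_sub _ _
        _ ≤ (|z| + 1) + a * |X ω| := by
            rw [abs_mul, abs_of_nonneg ha_nonneg]; linarith
    have hXi : (0:ℝ) ≤ |X ω| ^ i := pow_nonneg (abs_nonneg _) i
    calc |X ω| ^ i * c * (Real.exp (-(ξ / 2) * (t - a * X ω) ^ 2) * (ξ * |t - a * X ω|))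
        ≤ |X ω| ^ i * c * (1 * (ξ * |t - a * X ω|)) :=
          mul_le_mul_of_nonneg_left h2 (mul_nonneg hXi hc_nonneg)
      _ = |X ω| ^ i * c * ξ * |t - a * X ω| := by ring
      _ ≤ |X ω| ^ i * c * ξ * ((|z| + 1) + a * |X ω|) :=
          mul_le_mul_of_nonneg_left h3
            (mul_nonneg (mul_nonneg hXi hc_nonneg) (le_of_lt hξ))
      _ = bound ω := by simp only [hbound]; rw [pow_succ]; ring
  have h_diff : ∀ᵐ ω : Ω, ∀ t ∈ Metric.ball z 1,
      HasDerivAt (fun s => g i s ω) (g' t ω) t := by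
    filter_upwards with ω t _
    have hd : HasDerivAt (fun s : ℝ => -(ξ / 2) * (s - a * X ω) ^ 2)
        (-(ξ / 2) * ((2 : ℕ) * (t - a * X ω) ^ 1 * 1)) t := by
      exact (((hasDerivAt_id t).sub_const (a * X ω)).pow 2).const_mul (-(ξ / 2))
    have hd2 := (hd.exp).const_mul (X ω ^ i * c)
    refine hd2.congr_deriv ?_
    simp only [hg']
    ring
  have key := hasDerivAt_integral_of_dominated_loc_of_deriv_le
    (F := fun t ω => g i t ω) (F' := g') (x₀ := z) (bound := bound)
    (Metric.ball_mem_nhds z one_pos) (Filter.Eventually.of_forall (fun t => hgmeas i t)) (hgint i z)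
    hg'meas h_bound hbound_int h_diff
  have hderiv := key.2
  have hqi : q i = fun t => ∫ ω, g i t ω := by
    funext t
    rw [hq i t]
  have hval : (∫ ω, g' z ω) = ξ * a * q (i + 1) z - ξ * z * q i z := by
    have heq : g' z = fun ω => ξ * a * g (i + 1) z ω - ξ * z * g i z ω := by
      funext ω
      simp only [hg', hg]
      rw [pow_succ]
      ring
    rw [heq, integral_sub (((hgint (i + 1) z)).const_mul _) ((hgint i z).const_mul _),
      integral_const_mul, integral_const_mul, hq (i + 1) z, hq i z]
  have hderiv' : HasDerivAt (q i) (∫ ω, g' z ω) z := by rw [hqi]; exact hderiv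
  rw [hval] at hderiv'
  exact hderiv'
end

section
/- Let snr be a nonnegative real random variable with finite mean, and let β > 0 and σ > 0. Then there exists a unique ξ > 0 satisfying 1/ξ = σ² + β · E[ snr / (1 + ξ·snr) ]; moreover this solution satisfies ξ ≤ 1/σ². In particular, for σ = 1 (the Tse–Hanly equation 1/η = 1 + β·E[snr/(1+η·snr)]) the fixed-point equation has a unique positive solution and it lies in (0,1]. -/
open MeasureTheory

/-- The fixed-point equation `1/ξ = σ² + β·E[snr/(1+ξ·snr)]` (the Tse–Hanly
equation when `σ = 1`) has a unique positive solution, and this solution satisfies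
`ξ ≤ 1/σ²`. -/
theorem tse_hanly_unique_solution
    {Ω : Type*} [MeasureSpace Ω] [IsProbabilityMeasure (volume : Measure Ω)]
    (snr : Ω → ℝ) (hsnr_meas : Measurable snr)
    (hsnr_nonneg : ∀ ω, 0 ≤ snr ω) (hsnr_int : Integrable snr)
    (β σ : ℝ) (hβ : 0 < β) (hσ : 0 < σ) :
    ∃ ξ : ℝ, (0 < ξ ∧ 1 / ξ = σ ^ 2 + β * ∫ ω, snr ω / (1 + ξ * snr ω)) ∧
      ξ ≤ 1 / σ ^ 2 ∧
      ∀ ξ' : ℝ, 0 < ξ' → 1 / ξ' = σ ^ 2 + β * ∫ ω, snr ω / (1 + ξ' * snr ω) →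
        ξ' = ξ := by
  have hσ2 : (0:ℝ) < σ ^ 2 := by positivity
  have hden : ∀ (ξ : ℝ), 0 ≤ ξ → ∀ ω, (0:ℝ) < 1 + ξ * snr ω := by
    intro ξ hξ ω
    have := mul_nonneg hξ (hsnr_nonneg ω)
    linarith
  have hmeas : ∀ ξ : ℝ, AEStronglyMeasurable (fun ω => ξ * snr ω / (1 + ξ * snr ω))
      (volume : Measure Ω) :=
    fun ξ => ((measurable_const.mul hsnr_meas).div
      (measurable_const.add (measurable_const.mul hsnr_meas))).aestronglyMeasurable
  have hbnd : ∀ (ξ : ℝ), 0 ≤ ξ → ∀ ω, ‖ξ * snr ω / (1 + ξ * snr ω)‖ ≤ 1 := by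
    intro ξ hξ ω
    have hd := hden ξ hξ ω
    have hnum : 0 ≤ ξ * snr ω := mul_nonneg hξ (hsnr_nonneg ω)
    rw [Real.norm_eq_abs, abs_of_nonneg (div_nonneg hnum hd.le), div_le_one hd]
    linarith
  have hint : ∀ (ξ : ℝ), 0 ≤ ξ →
      Integrable (fun ω => ξ * snr ω / (1 + ξ * snr ω)) (volume : Measure Ω) := by
    intro ξ hξ
    exact (integrable_const (1:ℝ)).mono' (hmeas ξ)
      (Filter.Eventually.of_forall (hbnd ξ hξ))
  set G : ℝ → ℝ := fun ξ => ξ * σ ^ 2 + β * ∫ ω, ξ * snr ω / (1 + ξ * snr ω) with hG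
  -- strict monotonicity on Ici 0
  have hmono : StrictMonoOn G (Set.Ici 0) := by
    intro a ha b hb hab
    simp only [hG]
    have ha' : (0:ℝ) ≤ a := ha
    have hb' : (0:ℝ) ≤ b := hb
    have hI : (∫ ω, a * snr ω / (1 + a * snr ω)) ≤ ∫ ω, b * snr ω / (1 + b * snr ω) := by
      refine integral_mono (hint a ha') (hint b hb') ?_
      intro ω
      have hda := hden a ha' ω
      have hdb := hden b hb' ω
      rw [div_le_div_iff₀ hda hdb]
      have hs := hsnr_nonneg ω
      nlinarith [mul_nonneg (mul_nonneg ha' hb') (mul_nonneg hs hs)]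
    nlinarith
  -- continuity on Ici 0
  have hcont : ContinuousOn G (Set.Ici 0) := by
    have hIc : ContinuousOn (fun ξ : ℝ => ∫ ω, ξ * snr ω / (1 + ξ * snr ω)) (Set.Ici 0) := by
      intro ξ0 hξ0
      refine continuousWithinAt_of_dominated
        (Filter.Eventually.of_forall fun ξ => hmeas ξ)
        ?_ (integrable_const (1:ℝ)) ?_
      · exact Filter.eventually_of_mem self_mem_nhdsWithin
          (fun ξ hξ => Filter.Eventually.of_forall (hbnd ξ hξ))
      · refine Filter.Eventually.of_forall fun ω => ?_
        have hd := hden ξ0 hξ0 ω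
        exact ((continuousAt_id.mul continuousAt_const).div
          (continuousAt_const.add (continuousAt_id.mul continuousAt_const))
          hd.ne').continuousWithinAt
    exact (continuousOn_id.mul continuousOn_const).add (continuousOn_const.mul hIc)
  have hG0 : G 0 = 0 := by simp [hG]
  set B : ℝ := 1 / σ ^ 2 with hBdef
  have hBpos : 0 < B := by positivity
  have hGB : 1 ≤ G B := by
    have hI : 0 ≤ ∫ ω, B * snr ω / (1 + B * snr ω) :=
      integral_nonneg fun ω =>
        div_nonneg (mul_nonneg hBpos.le (hsnr_nonneg ω)) (hden B hBpos.le ω).le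
    have hB1 : B * σ ^ 2 = 1 := by rw [hBdef]; exact one_div_mul_cancel hσ2.ne'
    simp only [hG]
    nlinarith
  -- IVT
  obtain ⟨ξ, hξmem, hξeq⟩ : ∃ ξ ∈ Set.Icc (0:ℝ) B, G ξ = 1 := by
    have h1 : (1:ℝ) ∈ Set.Icc (G 0) (G B) := ⟨by rw [hG0]; norm_num, hGB⟩
    have := intermediate_value_Icc hBpos.le (hcont.mono Set.Icc_subset_Ici_self) h1
    obtain ⟨x, hx, hx1⟩ := this
    exact ⟨x, hx, hx1⟩
  have hξpos : 0 < ξ := by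
    rcases lt_or_eq_of_le hξmem.1 with h | h
    · exact h
    · exfalso; rw [← h] at hξeq; rw [hG0] at hξeq; norm_num at hξeq
  -- key equivalence
  have key : ∀ ξ0 : ℝ, 0 < ξ0 →
      ((1 / ξ0 = σ ^ 2 + β * ∫ ω, snr ω / (1 + ξ0 * snr ω)) ↔ G ξ0 = 1) := by
    intro ξ0 hξ0
    have hrw : (∫ ω, ξ0 * snr ω / (1 + ξ0 * snr ω))
        = ξ0 * ∫ ω, snr ω / (1 + ξ0 * snr ω) := by
      simp_rw [mul_div_assoc]
      exact integral_const_mul ξ0 _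
    simp only [hG, hrw]
    rw [div_eq_iff hξ0.ne']
    constructor <;> intro h <;> nlinarith
  refine ⟨ξ, ⟨hξpos, (key ξ hξpos).2 hξeq⟩, hξmem.2, ?_⟩
  intro ξ' hξ' heq'
  have hGξ' : G ξ' = 1 := (key ξ' hξ').1 heq'
  exact hmono.injOn hξ'.le hξmem.1 (hGξ'.trans hξeq.symm)
end

section
/- Let snr be a nonnegative real random variable with finite mean, and let β > 0. For each σ > 0 let ξ(σ) be the unique positive solution of 1/ξ = σ² + β·E[snr/(1+ξ·snr)], and define η(σ) = ξ(σ) + ξ(σ)·(σ² − 1) · ( 1 + β·E[ snr/(1+ξ(σ)·snr)² ] )⁻¹. Then as σ → ∞: σ²·ξ(σ) → 1 and η(σ) → 1/(1 + β·E[snr]). -/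
open MeasureTheory Filter

/-- Matched-filter limit: as the postulated noise level `σ → ∞`, the
solution `ξ(σ)` of `1/ξ = σ² + β·E[snr/(1+ξ·snr)]` satisfies `σ²·ξ(σ) → 1` and the
multiuser efficiency `η(σ)` tends to `1/(1+β·E[snr])`. -/
theorem matched_filter_efficiency_limit
    {Ω : Type*} [MeasureSpace Ω] [IsProbabilityMeasure (volume : Measure Ω)]
    (snr : Ω → ℝ) (hsnr_meas : Measurable snr)
    (hsnr_nonneg : ∀ ω, 0 ≤ snr ω) (hsnr_int : Integrable snr)
    (β : ℝ) (hβ : 0 < β)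
    (ξ η : ℝ → ℝ)
    (hξ_pos : ∀ σ, 0 < σ → 0 < ξ σ)
    (hξ_eq : ∀ σ, 0 < σ →
      1 / ξ σ = σ ^ 2 + β * ∫ ω, snr ω / (1 + ξ σ * snr ω))
    (hη : ∀ σ, 0 < σ → η σ = ξ σ + ξ σ * (σ ^ 2 - 1) *
      (1 + β * ∫ ω, snr ω / (1 + ξ σ * snr ω) ^ 2)⁻¹) :
    Tendsto (fun σ => σ ^ 2 * ξ σ) atTop (nhds 1) ∧
    Tendsto η atTop (nhds (1 / (1 + β * ∫ ω, snr ω))) := by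
  set E : ℝ := ∫ ω, snr ω with hEdef
  have hE0 : 0 ≤ E := integral_nonneg hsnr_nonneg
  set I : ℝ → ℝ := fun σ => ∫ ω, snr ω / (1 + ξ σ * snr ω) with hIdef
  set J : ℝ → ℝ := fun σ => ∫ ω, snr ω / (1 + ξ σ * snr ω) ^ 2 with hJdef
  have hden : ∀ σ, 0 < σ → ∀ ω, (1 : ℝ) ≤ 1 + ξ σ * snr ω := fun σ hσ ω =>
    le_add_of_nonneg_right (mul_nonneg (hξ_pos σ hσ).le (hsnr_nonneg ω))
  have hI_nonneg : ∀ σ, 0 < σ → 0 ≤ I σ := fun σ hσ =>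
    integral_nonneg fun ω => div_nonneg (hsnr_nonneg ω) (by linarith [hden σ hσ ω])
  have hI_le : ∀ σ, 0 < σ → I σ ≤ E := by
    intro σ hσ
    refine integral_mono_of_nonneg ?_ hsnr_int ?_
    · exact Filter.Eventually.of_forall fun ω =>
        div_nonneg (hsnr_nonneg ω) (by linarith [hden σ hσ ω])
    · exact Filter.Eventually.of_forall fun ω =>
        div_le_self (hsnr_nonneg ω) (hden σ hσ ω)
  have hξ_formula : ∀ σ, 0 < σ → ξ σ = (σ ^ 2 + β * I σ)⁻¹ := by
    intro σ hσ
    have h := hξ_eq σ hσ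
    rw [one_div] at h
    rw [← h, inv_inv]
  have hξ_le : ∀ σ, 0 < σ → ξ σ ≤ (σ ^ 2)⁻¹ := by
    intro σ hσ
    rw [hξ_formula σ hσ]
    have h1 : (0:ℝ) < σ ^ 2 := by positivity
    have := hI_nonneg σ hσ
    have hβI : 0 ≤ β * I σ := mul_nonneg hβ.le this
    exact inv_anti₀ h1 (by linarith)
  have hσ2 : Tendsto (fun σ : ℝ => σ ^ 2) atTop atTop :=
    tendsto_pow_atTop (by norm_num)
  have hξ0 : Tendsto ξ atTop (nhds 0) := by
    refine tendsto_of_tendsto_of_tendsto_of_le_of_le' tendsto_const_nhds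
      hσ2.inv_tendsto_atTop ?_ ?_
    · filter_upwards [eventually_gt_atTop (0:ℝ)] with σ hσ using (hξ_pos σ hσ).le
    · filter_upwards [eventually_gt_atTop (0:ℝ)] with σ hσ using hξ_le σ hσ
  -- lower bound function tends to 1
  have hLB : Tendsto (fun σ : ℝ => σ ^ 2 / (σ ^ 2 + β * E)) atTop (nhds 1) := by
    have h1 : Tendsto (fun σ : ℝ => 1 + (β * E) / σ ^ 2) atTop (nhds 1) := by
      have := hσ2.inv_tendsto_atTop.const_mul (β * E)
      have h2 : Tendsto (fun σ : ℝ => 1 + (β * E) * (σ ^ 2)⁻¹) atTop (nhds (1 + (β*E) * 0)) :=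
        tendsto_const_nhds.add this
      simpa [div_eq_mul_inv] using h2
    have h3 : Tendsto (fun σ : ℝ => (1 + (β * E) / σ ^ 2)⁻¹) atTop (nhds 1⁻¹) :=
      h1.inv₀ one_ne_zero
    rw [inv_one] at h3
    refine h3.congr' ?_
    filter_upwards [eventually_gt_atTop (0:ℝ)] with σ hσ
    have h4 : (0:ℝ) < σ ^ 2 := by positivity
    have h5 : (0:ℝ) < σ ^ 2 + β * E := by nlinarith
    field_simp
  have hmain : Tendsto (fun σ => σ ^ 2 * ξ σ) atTop (nhds 1) := by
    refine tendsto_of_tendsto_of_tendsto_of_le_of_le' hLB tendsto_const_nhds ?_ ?_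
    · filter_upwards [eventually_gt_atTop (0:ℝ)] with σ hσ
      have h4 : (0:ℝ) < σ ^ 2 := by positivity
      have hβI : 0 ≤ β * I σ := mul_nonneg hβ.le (hI_nonneg σ hσ)
      have h5 : (0:ℝ) < σ ^ 2 + β * I σ := by linarith
      have h6 : σ ^ 2 + β * I σ ≤ σ ^ 2 + β * E := by
        have := hI_le σ hσ; nlinarith
      rw [hξ_formula σ hσ, div_eq_mul_inv]
      exact mul_le_mul_of_nonneg_left (inv_anti₀ h5 h6) h4.le
    · filter_upwards [eventually_gt_atTop (0:ℝ)] with σ hσ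
      have h4 : (0:ℝ) < σ ^ 2 := by positivity
      calc σ ^ 2 * ξ σ ≤ σ ^ 2 * (σ ^ 2)⁻¹ :=
            mul_le_mul_of_nonneg_left (hξ_le σ hσ) h4.le
        _ = 1 := mul_inv_cancel₀ (ne_of_gt h4)
  refine ⟨hmain, ?_⟩
  -- J → E by dominated convergence
  have hJlim : Tendsto J atTop (nhds E) := by
    refine tendsto_integral_filter_of_dominated_convergence snr ?_ ?_ hsnr_int ?_
    · filter_upwards [eventually_gt_atTop (0:ℝ)] with σ hσ
      exact (hsnr_meas.div ((measurable_const.add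
        (hsnr_meas.const_mul (ξ σ))).pow_const 2)).aestronglyMeasurable
    · filter_upwards [eventually_gt_atTop (0:ℝ)] with σ hσ
      refine Filter.Eventually.of_forall fun ω => ?_
      have h1 := hden σ hσ ω
      have h2 : (1:ℝ) ≤ (1 + ξ σ * snr ω) ^ 2 := by nlinarith
      rw [Real.norm_eq_abs, abs_of_nonneg (div_nonneg (hsnr_nonneg ω) (by linarith))]
      exact div_le_self (hsnr_nonneg ω) h2
    · refine Filter.Eventually.of_forall fun ω => ?_
      have h1 : Tendsto (fun σ => (1 + ξ σ * snr ω) ^ 2) atTop (nhds 1) := by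
        have h2 : Tendsto (fun σ => 1 + ξ σ * snr ω) atTop (nhds (1 + 0 * snr ω)) :=
          tendsto_const_nhds.add ((hξ0.mul_const (snr ω)))
        simpa using h2.pow 2
      have := (tendsto_const_nhds (x := snr ω) (f := atTop)).div h1 one_ne_zero
      have h3 : Tendsto (fun σ => snr ω / (1 + ξ σ * snr ω) ^ 2) atTop (nhds (snr ω / 1)) := this
      rw [div_one] at h3
      exact h3
  -- ξ(σ²-1) → 1
  have hfac : Tendsto (fun σ => ξ σ * (σ ^ 2 - 1)) atTop (nhds 1) := by
    have h1 : Tendsto (fun σ => σ ^ 2 * ξ σ - ξ σ) atTop (nhds (1 - 0)) :=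
      hmain.sub hξ0
    rw [sub_zero] at h1
    refine h1.congr' ?_
    filter_upwards with σ
    ring
  have hEne : (1 : ℝ) + β * E ≠ 0 := by nlinarith
  have hJinv : Tendsto (fun σ => (1 + β * J σ)⁻¹) atTop (nhds (1 + β * E)⁻¹) :=
    (tendsto_const_nhds.add (hJlim.const_mul β)).inv₀ hEne
  have hηlim : Tendsto (fun σ => ξ σ + ξ σ * (σ ^ 2 - 1) * (1 + β * J σ)⁻¹) atTop
      (nhds (0 + 1 * (1 + β * E)⁻¹)) :=
    hξ0.add (hfac.mul hJinv)
  rw [zero_add, one_mul] at hηlim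
  rw [hEdef, ← one_div] at hηlim
  refine hηlim.congr' ?_
  filter_upwards [eventually_gt_atTop (0:ℝ)] with σ hσ
  exact (hη σ hσ).symm
end

section
/- Let snr be a real random variable with snr > 0 almost surely and finite mean, and let 0 < β < 1. For each σ > 0 let ξ(σ) be the unique positive solution of 1/ξ = σ² + β·E[snr/(1+ξ·snr)], and define η(σ) = ξ(σ) + ξ(σ)·(σ² − 1) · ( 1 + β·E[ snr/(1+ξ(σ)·snr)² ] )⁻¹. Then as σ → 0⁺: ξ(σ) → ∞, σ²·ξ(σ) → 1 − β, and η(σ) → 1 − β. -/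
open MeasureTheory Filter

set_option maxHeartbeats 1000000

private lemma aux_den' {t : ℝ} (ht : 0 < t) :
    Tendsto (fun x : ℝ => 1 + x * t) atTop atTop :=
  tendsto_atTop_add_const_left _ 1 (Tendsto.atTop_mul_const ht tendsto_id)

private lemma aux1' {t : ℝ} (ht : 0 < t) :
    Tendsto (fun x : ℝ => x * t / (1 + x * t)) atTop (nhds 1) := by
  have hinv : Tendsto (fun x : ℝ => (1 + x * t)⁻¹) atTop (nhds 0) :=
    (aux_den' ht).inv_tendsto_atTop
  have h : Tendsto (fun x : ℝ => 1 - (1 + x * t)⁻¹) atTop (nhds 1) := by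
    simpa using tendsto_const_nhds.sub hinv
  refine h.congr' ?_
  filter_upwards [(aux_den' ht).eventually_gt_atTop 0] with x hx
  field_simp
  ring

private lemma aux2' {t : ℝ} (ht : 0 < t) :
    Tendsto (fun x : ℝ => t / (1 + x * t) ^ 2) atTop (nhds 0) := by
  have hinv : Tendsto (fun x : ℝ => (1 + x * t)⁻¹) atTop (nhds 0) :=
    (aux_den' ht).inv_tendsto_atTop
  have h : Tendsto (fun x : ℝ => t * ((1 + x * t)⁻¹) ^ 2) atTop (nhds 0) := by
    simpa using (hinv.pow 2).const_mul t
  refine h.congr fun x => ?_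
  rw [div_eq_mul_inv, inv_pow]

private lemma aux3' {t : ℝ} (ht : 0 < t) :
    Tendsto (fun x : ℝ => x * t / (1 + x * t) ^ 2) atTop (nhds 0) := by
  have hinv : Tendsto (fun x : ℝ => (1 + x * t)⁻¹) atTop (nhds 0) :=
    (aux_den' ht).inv_tendsto_atTop
  have h : Tendsto (fun x : ℝ => (x * t / (1 + x * t)) * (1 + x * t)⁻¹) atTop (nhds 0) := by
    simpa using (aux1' ht).mul hinv
  refine h.congr fun x => ?_
  rw [pow_two, ← div_div, div_eq_mul_inv (x * t / (1 + x * t))]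

/-- Decorrelator limit: for load `β < 1`, as the postulated noise level
`σ → 0⁺`, the solution `ξ(σ)` of `1/ξ = σ² + β·E[snr/(1+ξ·snr)]` satisfies `ξ(σ) → ∞`,
`σ²·ξ(σ) → 1 − β`, and the multiuser efficiency `η(σ) → 1 − β`. -/
theorem decorrelator_efficiency_limit
    {Ω : Type*} [MeasureSpace Ω] [IsProbabilityMeasure (volume : Measure Ω)]
    (snr : Ω → ℝ) (hsnr_meas : Measurable snr)
    (hsnr_pos : ∀ᵐ ω, 0 < snr ω) (hsnr_int : Integrable snr)
    (β : ℝ) (hβ0 : 0 < β) (hβ1 : β < 1)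
    (ξ η : ℝ → ℝ)
    (hξ_pos : ∀ σ, 0 < σ → 0 < ξ σ)
    (hξ_eq : ∀ σ, 0 < σ →
      1 / ξ σ = σ ^ 2 + β * ∫ ω, snr ω / (1 + ξ σ * snr ω))
    (hη : ∀ σ, 0 < σ → η σ = ξ σ + ξ σ * (σ ^ 2 - 1) *
      (1 + β * ∫ ω, snr ω / (1 + ξ σ * snr ω) ^ 2)⁻¹) :
    Tendsto ξ (nhdsWithin 0 (Set.Ioi 0)) atTop ∧
    Tendsto (fun σ => σ ^ 2 * ξ σ) (nhdsWithin 0 (Set.Ioi 0)) (nhds (1 - β)) ∧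
    Tendsto η (nhdsWithin 0 (Set.Ioi 0)) (nhds (1 - β)) := by
  have hev : ∀ᶠ σ in nhdsWithin (0:ℝ) (Set.Ioi 0), 0 < σ := eventually_mem_nhdsWithin
  -- measurability
  have hm1 : ∀ x : ℝ, AEStronglyMeasurable (fun ω => snr ω / (1 + x * snr ω)) volume :=
    fun x => (hsnr_meas.div
      (measurable_const.add (measurable_const.mul hsnr_meas))).aestronglyMeasurable
  have hm1' : ∀ x : ℝ, AEStronglyMeasurable (fun ω => x * snr ω / (1 + x * snr ω)) volume :=
    fun x => ((measurable_const.mul hsnr_meas).div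
      (measurable_const.add (measurable_const.mul hsnr_meas))).aestronglyMeasurable
  have hm2 : ∀ x : ℝ, AEStronglyMeasurable (fun ω => snr ω / (1 + x * snr ω) ^ 2) volume :=
    fun x => (hsnr_meas.div
      ((measurable_const.add (measurable_const.mul hsnr_meas)).pow_const 2)).aestronglyMeasurable
  have hm2' : ∀ x : ℝ, AEStronglyMeasurable
      (fun ω => x * snr ω / (1 + x * snr ω) ^ 2) volume :=
    fun x => ((measurable_const.mul hsnr_meas).div
      ((measurable_const.add (measurable_const.mul hsnr_meas)).pow_const 2)).aestronglyMeasurable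
  -- integrability of snr/(1+x·snr)
  have hInt1 : ∀ x : ℝ, 0 < x → Integrable (fun ω => snr ω / (1 + x * snr ω)) volume := by
    intro x hx
    refine hsnr_int.mono (hm1 x) ?_
    filter_upwards [hsnr_pos] with ω hω
    have hd : (0:ℝ) < 1 + x * snr ω := by nlinarith
    rw [Real.norm_eq_abs, Real.norm_eq_abs, abs_of_nonneg (div_nonneg hω.le hd.le),
      abs_of_nonneg hω.le]
    exact div_le_self hω.le (by nlinarith)
  -- the integral I is ≤ 1/ξ and ≥ 0
  have hI0 : ∀ x : ℝ, 0 < x → 0 ≤ ∫ ω, snr ω / (1 + x * snr ω) := by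
    intro x hx
    refine integral_nonneg_of_ae ?_
    filter_upwards [hsnr_pos] with ω hω
    have hd : (0:ℝ) < 1 + x * snr ω := by nlinarith
    exact div_nonneg hω.le hd.le
  have hIle : ∀ x : ℝ, 0 < x → (∫ ω, snr ω / (1 + x * snr ω)) ≤ 1 / x := by
    intro x hx
    have h := integral_mono_ae (hInt1 x hx) (integrable_const (1 / x)) ?_
    · simpa using h
    · filter_upwards [hsnr_pos] with ω hω
      have hd : (0:ℝ) < 1 + x * snr ω := by nlinarith
      rw [div_le_div_iff₀ hd hx]
      nlinarith
  -- bounds on ξ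
  have hupper : ∀ σ : ℝ, 0 < σ → ξ σ ≤ 1 / σ ^ 2 := by
    intro σ hσ
    have hx := hξ_pos σ hσ
    have h1 : σ ^ 2 ≤ 1 / ξ σ := by
      rw [hξ_eq σ hσ]
      have := mul_nonneg hβ0.le (hI0 _ hx)
      linarith
    rw [le_div_iff₀ (by positivity : (0:ℝ) < σ ^ 2)]
    rw [le_div_iff₀ hx] at h1
    nlinarith
  have hlower : ∀ σ : ℝ, 0 < σ → (1 - β) / σ ^ 2 ≤ ξ σ := by
    intro σ hσ
    have hx := hξ_pos σ hσ
    have h1 : 1 / ξ σ ≤ σ ^ 2 + β * (1 / ξ σ) := by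
      refine le_trans (le_of_eq (hξ_eq σ hσ)) ?_
      have := mul_le_mul_of_nonneg_left (hIle _ hx) hβ0.le
      linarith
    have h2 : (1 - β) * (1 / ξ σ) ≤ σ ^ 2 := by linarith
    rw [mul_one_div, div_le_iff₀ hx] at h2
    rw [div_le_iff₀ (by positivity : (0:ℝ) < σ ^ 2)]
    nlinarith
  -- ξ → ∞
  have hsq : Tendsto (fun σ : ℝ => σ ^ 2) (nhdsWithin 0 (Set.Ioi 0))
      (nhdsWithin 0 (Set.Ioi 0)) := by
    rw [tendsto_nhdsWithin_iff]
    constructor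
    · have h := ((continuous_pow 2).tendsto (0:ℝ)).mono_left
        (nhdsWithin_le_nhds (s := Set.Ioi (0:ℝ)))
      simpa using h
    · filter_upwards [hev] with σ hσ
      exact pow_pos hσ 2
  have hinvsq : Tendsto (fun σ : ℝ => (σ ^ 2)⁻¹)
      (nhdsWithin 0 (Set.Ioi 0)) atTop := tendsto_inv_nhdsGT_zero.comp hsq
  have hlow' : Tendsto (fun σ : ℝ => (1 - β) / σ ^ 2)
      (nhdsWithin 0 (Set.Ioi 0)) atTop := by
    simpa [div_eq_mul_inv] using hinvsq.const_mul_atTop (by linarith : (0:ℝ) < 1 - β)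
  have hξtop : Tendsto ξ (nhdsWithin 0 (Set.Ioi 0)) atTop := by
    refine tendsto_atTop_mono' _ ?_ hlow'
    filter_upwards [hev] with σ hσ
    exact hlower σ hσ
  refine ⟨hξtop, ?_, ?_⟩
  -- dominated convergence: ∫ ξ·snr/(1+ξ·snr) → 1
  · have hG : Tendsto (fun σ => ∫ ω, ξ σ * snr ω / (1 + ξ σ * snr ω))
        (nhdsWithin 0 (Set.Ioi 0)) (nhds 1) := by
      have h := tendsto_integral_filter_of_dominated_convergence (μ := volume)
        (F := fun σ ω => ξ σ * snr ω / (1 + ξ σ * snr ω)) (f := fun _ => (1:ℝ))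
        (bound := fun _ => (1:ℝ)) (l := nhdsWithin 0 (Set.Ioi 0))
        (Eventually.of_forall fun σ => hm1' (ξ σ))
        ?_ (integrable_const 1) ?_
      · simpa using h
      · filter_upwards [hev] with σ hσ
        filter_upwards [hsnr_pos] with ω hω
        have hx := hξ_pos σ hσ
        have hd : (0:ℝ) < 1 + ξ σ * snr ω := by nlinarith
        rw [Real.norm_eq_abs,
          abs_of_nonneg (div_nonneg (by nlinarith) hd.le)]
        rw [div_le_one hd]
        linarith
      · filter_upwards [hsnr_pos] with ω hω
        exact (aux1' hω).comp hξtop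
    have hkey : ∀ σ : ℝ, 0 < σ →
        σ ^ 2 * ξ σ = 1 - β * ∫ ω, ξ σ * snr ω / (1 + ξ σ * snr ω) := by
      intro σ hσ
      have hx := hξ_pos σ hσ
      have hI : (∫ ω, ξ σ * snr ω / (1 + ξ σ * snr ω))
          = ξ σ * ∫ ω, snr ω / (1 + ξ σ * snr ω) := by
        simp_rw [mul_div_assoc]
        exact integral_const_mul _ _
      have h2 : ξ σ * (1 / ξ σ) = ξ σ * (σ ^ 2 + β * ∫ ω, snr ω / (1 + ξ σ * snr ω)) := by
        rw [hξ_eq σ hσ]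
      rw [mul_one_div, div_self hx.ne'] at h2
      rw [hI]
      nlinarith [h2]
    have h2 : Tendsto (fun σ => 1 - β * ∫ ω, ξ σ * snr ω / (1 + ξ σ * snr ω))
        (nhdsWithin 0 (Set.Ioi 0)) (nhds (1 - β)) := by
      have := (hG.const_mul β).const_sub 1
      simpa using this
    refine h2.congr' ?_
    filter_upwards [hev] with σ hσ
    exact (hkey σ hσ).symm
  -- η → 1 - β
  · have hG : Tendsto (fun σ => ∫ ω, ξ σ * snr ω / (1 + ξ σ * snr ω))
        (nhdsWithin 0 (Set.Ioi 0)) (nhds 1) := by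
      have h := tendsto_integral_filter_of_dominated_convergence (μ := volume)
        (F := fun σ ω => ξ σ * snr ω / (1 + ξ σ * snr ω)) (f := fun _ => (1:ℝ))
        (bound := fun _ => (1:ℝ)) (l := nhdsWithin 0 (Set.Ioi 0))
        (Eventually.of_forall fun σ => hm1' (ξ σ))
        ?_ (integrable_const 1) ?_
      · simpa using h
      · filter_upwards [hev] with σ hσ
        filter_upwards [hsnr_pos] with ω hω
        have hx := hξ_pos σ hσ
        have hd : (0:ℝ) < 1 + ξ σ * snr ω := by nlinarith
        rw [Real.norm_eq_abs,
          abs_of_nonneg (div_nonneg (by nlinarith) hd.le)]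
        rw [div_le_one hd]
        linarith
      · filter_upwards [hsnr_pos] with ω hω
        exact (aux1' hω).comp hξtop
    have hσ2ξ : Tendsto (fun σ => σ ^ 2 * ξ σ) (nhdsWithin 0 (Set.Ioi 0))
        (nhds (1 - β)) := by
      have hkey : ∀ σ : ℝ, 0 < σ →
          σ ^ 2 * ξ σ = 1 - β * ∫ ω, ξ σ * snr ω / (1 + ξ σ * snr ω) := by
        intro σ hσ
        have hx := hξ_pos σ hσ
        have hI : (∫ ω, ξ σ * snr ω / (1 + ξ σ * snr ω))
            = ξ σ * ∫ ω, snr ω / (1 + ξ σ * snr ω) := by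
          simp_rw [mul_div_assoc]
          exact integral_const_mul _ _
        have h2 : ξ σ * (1 / ξ σ) = ξ σ * (σ ^ 2 + β * ∫ ω, snr ω / (1 + ξ σ * snr ω)) := by
          rw [hξ_eq σ hσ]
        rw [mul_one_div, div_self hx.ne'] at h2
        rw [hI]
        nlinarith [h2]
      have h2 : Tendsto (fun σ => 1 - β * ∫ ω, ξ σ * snr ω / (1 + ξ σ * snr ω))
          (nhdsWithin 0 (Set.Ioi 0)) (nhds (1 - β)) := by
        have := (hG.const_mul β).const_sub 1
        simpa using this
      refine h2.congr' ?_
      filter_upwards [hev] with σ hσ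
      exact (hkey σ hσ).symm
    -- J → 0
    have hJ : Tendsto (fun σ => ∫ ω, snr ω / (1 + ξ σ * snr ω) ^ 2)
        (nhdsWithin 0 (Set.Ioi 0)) (nhds 0) := by
      have h := tendsto_integral_filter_of_dominated_convergence (μ := volume)
        (F := fun σ ω => snr ω / (1 + ξ σ * snr ω) ^ 2) (f := fun _ => (0:ℝ))
        (bound := fun ω => snr ω) (l := nhdsWithin 0 (Set.Ioi 0))
        (Eventually.of_forall fun σ => hm2 (ξ σ))
        ?_ hsnr_int ?_
      · simpa using h
      · filter_upwards [hev] with σ hσ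
        filter_upwards [hsnr_pos] with ω hω
        have hx := hξ_pos σ hσ
        have hd : (0:ℝ) < 1 + ξ σ * snr ω := by nlinarith
        have hd2 : (0:ℝ) < (1 + ξ σ * snr ω) ^ 2 := by positivity
        rw [Real.norm_eq_abs, abs_of_nonneg (div_nonneg hω.le hd2.le)]
        exact div_le_self hω.le (by nlinarith [mul_pos hx hω, sq_nonneg (ξ σ * snr ω)])
      · filter_upwards [hsnr_pos] with ω hω
        exact (aux2' hω).comp hξtop
    -- K = ∫ ξ·snr/(1+ξ·snr)² → 0
    have hK : Tendsto (fun σ => ∫ ω, ξ σ * snr ω / (1 + ξ σ * snr ω) ^ 2)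
        (nhdsWithin 0 (Set.Ioi 0)) (nhds 0) := by
      have h := tendsto_integral_filter_of_dominated_convergence (μ := volume)
        (F := fun σ ω => ξ σ * snr ω / (1 + ξ σ * snr ω) ^ 2) (f := fun _ => (0:ℝ))
        (bound := fun _ => (1:ℝ)) (l := nhdsWithin 0 (Set.Ioi 0))
        (Eventually.of_forall fun σ => hm2' (ξ σ))
        ?_ (integrable_const 1) ?_
      · simpa using h
      · filter_upwards [hev] with σ hσ
        filter_upwards [hsnr_pos] with ω hω
        have hx := hξ_pos σ hσ
        have hd : (0:ℝ) < 1 + ξ σ * snr ω := by nlinarith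
        have hd2 : (0:ℝ) < (1 + ξ σ * snr ω) ^ 2 := by positivity
        rw [Real.norm_eq_abs, abs_of_nonneg (div_nonneg (by nlinarith) hd2.le)]
        rw [div_le_one hd2]
        nlinarith [mul_pos hx hω, sq_nonneg (ξ σ * snr ω)]
      · filter_upwards [hsnr_pos] with ω hω
        exact (aux3' hω).comp hξtop
    -- J ≥ 0
    have hJ0 : ∀ σ : ℝ, 0 < σ → 0 ≤ ∫ ω, snr ω / (1 + ξ σ * snr ω) ^ 2 := by
      intro σ hσ
      refine integral_nonneg_of_ae ?_
      filter_upwards [hsnr_pos] with ω hω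
      have hx := hξ_pos σ hσ
      have hd2 : (0:ℝ) < (1 + ξ σ * snr ω) ^ 2 := by positivity
      exact div_nonneg hω.le hd2.le
    -- identity for η
    have hηeq : ∀ σ : ℝ, 0 < σ → η σ =
        (σ ^ 2 * ξ σ + β * ∫ ω, ξ σ * snr ω / (1 + ξ σ * snr ω) ^ 2)
          / (1 + β * ∫ ω, snr ω / (1 + ξ σ * snr ω) ^ 2) := by
      intro σ hσ
      have hx := hξ_pos σ hσ
      have hKJ : (∫ ω, ξ σ * snr ω / (1 + ξ σ * snr ω) ^ 2)
          = ξ σ * ∫ ω, snr ω / (1 + ξ σ * snr ω) ^ 2 := by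
        simp_rw [mul_div_assoc]
        exact integral_const_mul _ _
      set J := ∫ ω, snr ω / (1 + ξ σ * snr ω) ^ 2 with hJdef
      have hD : (0:ℝ) < 1 + β * J := by
        have := mul_nonneg hβ0.le (hJ0 σ hσ)
        linarith
      rw [hη σ hσ, ← hJdef, hKJ, eq_div_iff hD.ne', add_mul,
        mul_assoc (ξ σ * (σ ^ 2 - 1)), inv_mul_cancel₀ hD.ne']
      ring
    have hD : Tendsto (fun σ => 1 + β * ∫ ω, snr ω / (1 + ξ σ * snr ω) ^ 2)
        (nhdsWithin 0 (Set.Ioi 0)) (nhds 1) := by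
      have := (hJ.const_mul β).const_add 1
      simpa using this
    have hnum : Tendsto (fun σ => σ ^ 2 * ξ σ +
        β * ∫ ω, ξ σ * snr ω / (1 + ξ σ * snr ω) ^ 2)
        (nhdsWithin 0 (Set.Ioi 0)) (nhds (1 - β)) := by
      have := hσ2ξ.add (hK.const_mul β)
      simpa using this
    have hfin := hnum.div hD one_ne_zero
    rw [div_one] at hfin
    refine hfin.congr' ?_
    filter_upwards [hev] with σ hσ
    exact (hηeq σ hσ).symm
end

section
/- Let β > 0, let W, W₁, W₂, … be independent identically distributed real random variables, and let g : [0, β] × ℝ → ℝ be a bounded function which is jointly continuous. Then, almost surely, (1/L) · Σ_{k=1}^{⌊βL⌋} g(k/L, W_k) → ∫₀^β E[ g(t, W) ] dt as L → ∞. -/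
open MeasureTheory ProbabilityTheory Filter Real

lemma exp_le_quad {x : ℝ} (hx : |x| ≤ 1) : Real.exp x ≤ 1 + x + x ^ 2 := by
  have h := Real.exp_bound hx (n := 2) (by norm_num)
  have hs : ∑ m ∈ Finset.range 2, x ^ m / m.factorial = 1 + x := by
    simp [Finset.sum_range_succ]
  rw [hs] at h
  have h2 : |x| ^ 2 = x ^ 2 := sq_abs x
  have h3 := abs_le.mp h
  norm_num at h3
  nlinarith [h3.1, h3.2, sq_abs x]

lemma integrable_of_bdd {Ω : Type*} [MeasureSpace Ω] [IsFiniteMeasure (volume : Measure Ω)]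
    {f : Ω → ℝ} (hm : AEStronglyMeasurable f volume) {C : ℝ} (h : ∀ ω, |f ω| ≤ C) :
    Integrable f :=
  ⟨hm, HasFiniteIntegral.of_bounded (C := C) (ae_of_all _ h)⟩

lemma mgf_le_of_bdd {Ω : Type*} [MeasureSpace Ω] [IsProbabilityMeasure (volume : Measure Ω)]
    {Y : Ω → ℝ} (hm : Measurable Y) {c s : ℝ} (hc : 0 < c) (hs : 0 ≤ s) (hsc : s * c ≤ 1)
    (hbd : ∀ ω, |Y ω| ≤ c) (hmean : ∫ ω, Y ω = 0) :
    mgf Y volume s ≤ Real.exp (c ^ 2 * s ^ 2) := by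
  have hYint : Integrable Y := integrable_of_bdd hm.aestronglyMeasurable hbd
  have hY2int : Integrable (fun ω => Y ω ^ 2) :=
    integrable_of_bdd (hm.pow_const 2).aestronglyMeasurable (C := c ^ 2)
      (fun ω => by rw [abs_pow]; exact pow_le_pow_left₀ (abs_nonneg _) (hbd ω) 2)
  have hpt : ∀ ω, Real.exp (s * Y ω) ≤ 1 + s * Y ω + s ^ 2 * Y ω ^ 2 := by
    intro ω
    have h1 : |s * Y ω| ≤ 1 := by
      rw [abs_mul, abs_of_nonneg hs]
      calc s * |Y ω| ≤ s * c := by gcongr; exact hbd ω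
        _ ≤ 1 := hsc
    calc Real.exp (s * Y ω) ≤ 1 + s * Y ω + (s * Y ω) ^ 2 := exp_le_quad h1
      _ = 1 + s * Y ω + s ^ 2 * Y ω ^ 2 := by ring
  have hexp_int : Integrable (fun ω => Real.exp (s * Y ω)) := by
    refine integrable_of_bdd ((hm.const_mul s).exp).aestronglyMeasurable
      (C := Real.exp (s * c)) (fun ω => ?_)
    rw [abs_of_pos (Real.exp_pos _)]
    apply Real.exp_le_exp.2
    calc s * Y ω ≤ s * |Y ω| :=
          mul_le_mul_of_nonneg_left (le_abs_self _) hs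
      _ ≤ s * c := mul_le_mul_of_nonneg_left (hbd ω) hs
  have hrhs_int : Integrable (fun ω => 1 + s * Y ω + s ^ 2 * Y ω ^ 2) := by
    exact ((integrable_const 1).add (hYint.const_mul s)).add (hY2int.const_mul (s ^ 2))
  have hEY2 : ∫ ω, Y ω ^ 2 ≤ c ^ 2 := by
    calc ∫ ω, Y ω ^ 2 ≤ ∫ _ω : Ω, c ^ 2 := by
          refine integral_mono hY2int (integrable_const _) (fun ω => ?_)
          exact sq_le_sq' (neg_le_of_abs_le (hbd ω)) (le_of_abs_le (hbd ω))
      _ = c ^ 2 := by simp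
  calc mgf Y volume s = ∫ ω, Real.exp (s * Y ω) := rfl
    _ ≤ ∫ ω, (1 + s * Y ω + s ^ 2 * Y ω ^ 2) := integral_mono hexp_int hrhs_int hpt
    _ = 1 + s * (∫ ω, Y ω) + s ^ 2 * ∫ ω, Y ω ^ 2 := by
        have hA : Integrable (fun ω => 1 + s * Y ω) :=
          by exact (integrable_const 1).add (hYint.const_mul s)
        have hB : Integrable (fun ω => s ^ 2 * Y ω ^ 2) := hY2int.const_mul _
        have hC : Integrable (fun ω => s * Y ω) := hYint.const_mul s
        rw [integral_add hA hB, integral_add (integrable_const 1) hC,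
          integral_const_mul, integral_const_mul]
        simp
    _ ≤ 1 + c ^ 2 * s ^ 2 := by rw [hmean]; nlinarith [sq_nonneg s]
    _ ≤ Real.exp (c ^ 2 * s ^ 2) := by
        have := Real.add_one_le_exp (c ^ 2 * s ^ 2); linarith

lemma chernoff_sum {Ω : Type*} [MeasureSpace Ω] [IsProbabilityMeasure (volume : Measure Ω)]
    (Y : ℕ → Ω → ℝ) (hmeas : ∀ k, Measurable (Y k))
    (hindep : iIndepFun (m := fun _ => Real.measurableSpace) Y volume)
    {c s : ℝ} (hc : 0 < c) (hs : 0 ≤ s) (hsc : s * c ≤ 1)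
    (hbd : ∀ k ω, |Y k ω| ≤ c) (hmean : ∀ k, ∫ ω, Y k ω = 0)
    (t : Finset ℕ) (ε : ℝ) :
    (volume {ω | ε ≤ ∑ k ∈ t, Y k ω}).toReal ≤
      Real.exp (-s * ε) * Real.exp ((t.card : ℝ) * (c ^ 2 * s ^ 2)) := by
  set X : Ω → ℝ := fun ω => ∑ k ∈ t, Y k ω with hX
  have hXbd : ∀ ω, |X ω| ≤ (t.card : ℝ) * c := fun ω =>
    (Finset.abs_sum_le_sum_abs _ _).trans <| by
      calc ∑ k ∈ t, |Y k ω| ≤ ∑ _k ∈ t, c := Finset.sum_le_sum fun k _ => hbd k ω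
        _ = (t.card : ℝ) * c := by simp [mul_comm]
  have hXmeas : Measurable X := by
    apply Finset.measurable_sum
    exact fun k _ => hmeas k
  have hint : Integrable (fun ω => Real.exp (s * X ω)) := by
    refine integrable_of_bdd ((hXmeas.const_mul s).exp).aestronglyMeasurable
      (C := Real.exp (s * ((t.card : ℝ) * c))) (fun ω => ?_)
    rw [abs_of_pos (Real.exp_pos _)]
    apply Real.exp_le_exp.2
    calc s * X ω ≤ s * |X ω| := mul_le_mul_of_nonneg_left (le_abs_self _) hs
      _ ≤ s * ((t.card : ℝ) * c) := mul_le_mul_of_nonneg_left (hXbd ω) hs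
  have h1 := measure_ge_le_exp_mul_mgf (μ := volume) (X := X) (t := s) ε hs hint
  refine h1.trans (mul_le_mul_of_nonneg_left ?_ (Real.exp_pos _).le)
  have hXsum : X = ∑ k ∈ t, Y k := by
    funext ω; simp [hX, Finset.sum_apply]
  rw [hXsum, hindep.mgf_sum hmeas]
  calc ∏ k ∈ t, mgf (Y k) volume s ≤ ∏ _k ∈ t, Real.exp (c ^ 2 * s ^ 2) := by
        refine Finset.prod_le_prod (fun k _ => mgf_nonneg) (fun k _ => ?_)
        exact mgf_le_of_bdd (hmeas k) hc hs hsc (hbd k) (hmean k)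
    _ = Real.exp ((t.card : ℝ) * (c ^ 2 * s ^ 2)) := by
        rw [Finset.prod_const, ← Real.exp_nat_mul]

lemma riemann_tendsto {β : ℝ} (hβ : 0 < β) {F : ℝ → ℝ}
    (hF : ContinuousOn F (Set.Icc 0 β)) :
    Tendsto (fun L : ℕ => (1 / (L : ℝ)) * ∑ k ∈ Finset.Icc 1 ⌊β * (L : ℝ)⌋₊, F ((k : ℝ) / L))
      atTop (nhds (∫ t in (0:ℝ)..β, F t)) := by
  obtain ⟨C, hC⟩ := (isCompact_Icc (a := (0:ℝ)) (b := β)).exists_bound_of_continuousOn hF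
  have hC0 : 0 ≤ C := (norm_nonneg _).trans (hC 0 (Set.left_mem_Icc.2 hβ.le))
  have hFInt : ∀ a b, a ∈ Set.Icc 0 β → b ∈ Set.Icc 0 β → IntervalIntegrable F volume a b := by
    intro a b ha hb
    exact (hF.mono (Set.uIcc_subset_Icc ha hb)).intervalIntegrable
  rw [Metric.tendsto_atTop]
  intro ε hε
  have huc := (isCompact_Icc (a := (0:ℝ)) (b := β)).uniformContinuousOn_of_continuous hF
  rw [Metric.uniformContinuousOn_iff] at huc
  set ε' := ε / (2 * (β + 1)) with hε'
  have hε'0 : 0 < ε' := by positivity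
  obtain ⟨δ, hδ0, hδ⟩ := huc ε' hε'0
  obtain ⟨N0, hN0⟩ := exists_nat_gt (max (1 / δ) ((C + 1) * 2 / ε))
  refine ⟨N0 + 1, fun L hL => ?_⟩
  have hL1 : 1 ≤ L := le_trans (Nat.le_add_left 1 N0) hL
  have hLpos : (0:ℝ) < L := by exact_mod_cast hL1
  have hN0L : (N0 : ℝ) ≤ L := by exact_mod_cast Nat.le_of_succ_le hL
  have hinvδ : 1 / (L:ℝ) < δ := by
    rw [div_lt_iff₀ hLpos]
    have h1 : 1 / δ < (L : ℝ) := lt_of_le_of_lt (le_max_left _ _) (hN0.trans_le hN0L)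
    calc (1:ℝ) = δ * (1 / δ) := by field_simp
      _ < δ * L := by gcongr
  have hCL : (C + 1) * 2 / ε < (L:ℝ) :=
    lt_of_le_of_lt (le_max_right _ _) (hN0.trans_le hN0L)
  set n := ⌊β * (L : ℝ)⌋₊ with hn
  have hnle : (n : ℝ) ≤ β * L := Nat.floor_le (by positivity)
  have hngt : β * L < n + 1 := Nat.lt_floor_add_one _
  have hmem : ∀ k : ℕ, k ≤ n → ((k : ℝ) / L) ∈ Set.Icc (0:ℝ) β := by
    intro k hk
    constructor
    · positivity
    · rw [div_le_iff₀ hLpos]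
      calc (k : ℝ) ≤ n := by exact_mod_cast hk
        _ ≤ β * L := hnle
  set a : ℕ → ℝ := fun k => (k : ℝ) / L with ha
  have hsplit : ∫ t in (0:ℝ)..β, F t =
      (∑ k ∈ Finset.range n, ∫ t in a k..a (k+1), F t) + ∫ t in a n..β, F t := by
    have h1 : ∑ k ∈ Finset.range n, ∫ t in a k..a (k+1), F t = ∫ t in (a 0)..(a n), F t :=
      intervalIntegral.sum_integral_adjacent_intervals
        (fun k hk => hFInt _ _ (hmem k hk.le) (hmem (k+1) hk))
    have h0 : a 0 = 0 := by simp [ha]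
    rw [h1, h0, intervalIntegral.integral_add_adjacent_intervals
      (hFInt 0 (a n) (Set.left_mem_Icc.2 hβ.le) (hmem n le_rfl))
      (hFInt (a n) β (hmem n le_rfl) (Set.right_mem_Icc.2 hβ.le))]
  have hsum : ∑ k ∈ Finset.Icc 1 n, F ((k : ℝ) / L)
      = ∑ k ∈ Finset.range n, F (a (k + 1)) := by
    rw [← Finset.Ico_add_one_right_eq_Icc, Finset.sum_Ico_eq_sum_range]
    simp only [Nat.add_sub_cancel]
    refine Finset.sum_congr rfl (fun k _ => ?_)
    congr 2
    push_cast [ha]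
    ring_nf
  have hterm : ∀ k ∈ Finset.range n,
      |(1 / (L:ℝ)) * F (a (k+1)) - ∫ t in a k..a (k+1), F t| ≤ ε' * (1 / L) := by
    intro k hk
    have hkn : k < n := Finset.mem_range.mp hk
    have hle : a k ≤ a (k+1) := by
      apply div_le_div_of_nonneg_right ?_ hLpos.le
      push_cast; linarith
    have hconst : (1 / (L:ℝ)) * F (a (k+1)) = ∫ _t in a k..a (k+1), F (a (k+1)) := by
      rw [intervalIntegral.integral_const, smul_eq_mul]
      have : a (k+1) - a k = 1 / L := by
        rw [ha]; push_cast; field_simp; ring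
      rw [this, mul_comm]
    rw [hconst, ← intervalIntegral.integral_sub intervalIntegrable_const
      (hFInt _ _ (hmem k hkn.le) (hmem (k+1) hkn))]
    have hbound : ∀ t ∈ Set.uIoc (a k) (a (k+1)), ‖F (a (k+1)) - F t‖ ≤ ε' := by
      intro t ht
      rw [Set.uIoc_of_le hle] at ht
      have htmem : t ∈ Set.Icc (0:ℝ) β := by
        constructor
        · exact le_trans (by positivity : (0:ℝ) ≤ a k) ht.1.le
        · exact ht.2.trans (hmem (k+1) hkn).2
      have hdist : dist (a (k+1)) t < δ := by
        rw [Real.dist_eq, abs_of_nonneg (by linarith [ht.2] : (0:ℝ) ≤ a (k+1) - t)]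
        have : a (k+1) - t < a (k+1) - a k := by linarith [ht.1]
        have h2 : a (k+1) - a k = 1 / L := by
          rw [ha]; push_cast; field_simp; ring
        rw [h2] at this
        exact this.trans hinvδ
      have := hδ _ (hmem (k+1) hkn) t htmem hdist
      rw [Real.dist_eq] at this
      rw [Real.norm_eq_abs]
      exact le_of_lt this
    have := intervalIntegral.norm_integral_le_of_norm_le_const hbound
    rw [Real.norm_eq_abs] at this
    refine this.trans ?_
    have h2' : a (k+1) - a k = 1 / L := by
      rw [ha]; push_cast; field_simp; ring
    have h2 : |a (k+1) - a k| = 1 / L := by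
      rw [h2']; exact abs_of_nonneg (by positivity)
    rw [h2]
  -- now assemble
  have hrw : (1 / (L:ℝ)) * ∑ k ∈ Finset.Icc 1 n, F ((k : ℝ) / L)
      = ∑ k ∈ Finset.range n, (1 / (L:ℝ)) * F (a (k+1)) := by
    rw [hsum, Finset.mul_sum]
  rw [Real.dist_eq, hrw, hsplit]
  have key : ∑ k ∈ Finset.range n, (1 / (L:ℝ)) * F (a (k+1))
      - ((∑ k ∈ Finset.range n, ∫ t in a k..a (k+1), F t) + ∫ t in a n..β, F t)
      = (∑ k ∈ Finset.range n, ((1 / (L:ℝ)) * F (a (k+1)) - ∫ t in a k..a (k+1), F t))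
        - ∫ t in a n..β, F t := by
    rw [Finset.sum_sub_distrib]; ring
  rw [key]
  have hmain : |∑ k ∈ Finset.range n, ((1 / (L:ℝ)) * F (a (k+1)) - ∫ t in a k..a (k+1), F t)|
      ≤ (n : ℝ) * (ε' * (1 / L)) := by
    refine (Finset.abs_sum_le_sum_abs _ _).trans ?_
    calc ∑ k ∈ Finset.range n, |(1 / (L:ℝ)) * F (a (k+1)) - ∫ t in a k..a (k+1), F t|
        ≤ ∑ _k ∈ Finset.range n, ε' * (1 / (L:ℝ)) := Finset.sum_le_sum hterm
      _ = (n : ℝ) * (ε' * (1 / L)) := by simp [mul_comm]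
  have htail : |∫ t in a n..β, F t| ≤ C * (1 / L) := by
    have hb : ∀ t ∈ Set.uIoc (a n) β, ‖F t‖ ≤ C := by
      intro t ht
      rw [Set.uIoc_of_le (hmem n le_rfl).2] at ht
      exact hC t ⟨le_trans (by positivity : (0:ℝ) ≤ a n) ht.1.le, ht.2⟩
    have := intervalIntegral.norm_integral_le_of_norm_le_const hb
    rw [Real.norm_eq_abs] at this
    refine this.trans ?_
    gcongr
    rw [abs_of_nonneg (by linarith [(hmem n le_rfl).2] : (0:ℝ) ≤ β - a n)]
    have : β - (n:ℝ)/L < 1 / L := by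
      rw [sub_lt_iff_lt_add, ← add_div, lt_div_iff₀ hLpos]
      linarith
    exact this.le
  calc |(∑ k ∈ Finset.range n, ((1 / (L:ℝ)) * F (a (k+1)) - ∫ t in a k..a (k+1), F t))
        - ∫ t in a n..β, F t|
      ≤ |∑ k ∈ Finset.range n, ((1 / (L:ℝ)) * F (a (k+1)) - ∫ t in a k..a (k+1), F t)|
        + |∫ t in a n..β, F t| := abs_sub _ _
    _ ≤ (n : ℝ) * (ε' * (1 / L)) + C * (1 / L) := add_le_add hmain htail
    _ < ε := by
        have h1 : (n : ℝ) * (ε' * (1 / L)) ≤ β * ε' := by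
          rw [mul_comm (ε') (1 / (L:ℝ)), ← mul_assoc]
          calc (n:ℝ) * (1 / L) * ε' ≤ (β * L) * (1/L) * ε' := by gcongr
            _ = β * ε' := by field_simp
        have hb1 : (0:ℝ) < β + 1 := by linarith
        have h2 : β * ε' < ε / 2 := by
          have hlt : β / (β + 1) < 1 := (div_lt_one hb1).mpr (by linarith)
          calc β * ε' = ε / 2 * (β / (β + 1)) := by rw [hε']; field_simp
            _ < ε / 2 * 1 := by
                exact mul_lt_mul_of_pos_left hlt (by positivity)
            _ = ε / 2 := mul_one _
        have h3 : C * (1 / (L:ℝ)) < ε / 2 := by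
          have hcl2 : (C + 1) * 2 < (L:ℝ) * ε := (div_lt_iff₀ hε).mp hCL
          rw [mul_one_div, div_lt_iff₀ hLpos]
          linarith
        linarith

open MeasureTheory ProbabilityTheory Filter

/-- Law of large numbers for successive decoding: for i.i.d. random
variables `W₁, W₂, …` with common law `μ` and a bounded jointly continuous function `g` on
`[0,β] × ℝ`, almost surely `(1/L)·Σ_{k=1}^{⌊βL⌋} g(k/L, W_k) → ∫₀^β E[g(t,W)] dt`. -/
theorem successive_decoding_lln
    {Ω : Type*} [MeasureSpace Ω] [IsProbabilityMeasure (volume : Measure Ω)]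
    (β : ℝ) (hβ : 0 < β)
    (W : ℕ → Ω → ℝ) (hW_meas : ∀ k, Measurable (W k))
    (μ : Measure ℝ) [IsProbabilityMeasure μ]
    (hW_law : ∀ k, Measure.map (W k) volume = μ)
    (hW_indep : iIndepFun (m := fun _ => Real.measurableSpace) W volume)
    (g : ℝ → ℝ → ℝ)
    (hg_cont : ContinuousOn (fun tx : ℝ × ℝ => g tx.1 tx.2)
      (Set.Icc 0 β ×ˢ Set.univ))
    (M : ℝ) (hg_bdd : ∀ t ∈ Set.Icc 0 β, ∀ x : ℝ, |g t x| ≤ M) :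
    ∀ᵐ ω, Tendsto
      (fun L : ℕ => (1 / (L : ℝ)) *
        ∑ k ∈ Finset.Icc 1 ⌊β * (L : ℝ)⌋₊, g ((k : ℝ) / (L : ℝ)) (W k ω))
      atTop (nhds (∫ t in (0:ℝ)..β, ∫ x, g t x ∂μ)) := by
  have hM0 : 0 ≤ M := (abs_nonneg _).trans (hg_bdd 0 (Set.left_mem_Icc.2 hβ.le) 0)
  -- clamping map onto [0, β]
  set c : ℝ → ℝ := fun t => max 0 (min t β) with hc
  have hcmem : ∀ t, c t ∈ Set.Icc 0 β := fun t =>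
    ⟨le_max_left _ _, max_le hβ.le (min_le_right _ _)⟩
  have hceq : ∀ t, t ∈ Set.Icc 0 β → c t = t := by
    intro t ht
    rw [hc]
    simp only [min_eq_left ht.2]
    exact max_eq_right ht.1
  -- slice continuity
  have hg_slice : ∀ t, t ∈ Set.Icc 0 β → Continuous fun x => g t x := by
    intro t ht
    rw [← continuousOn_univ]
    have he : (fun x => g t x) = (fun p : ℝ × ℝ => g p.1 p.2) ∘ (fun x : ℝ => (t, x)) := rfl
    rw [he]
    exact hg_cont.comp (Continuous.continuousOn (by continuity)) (fun x _ => ⟨ht, trivial⟩)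
  have ht_slice : ∀ x : ℝ, ContinuousOn (fun t => g t x) (Set.Icc 0 β) := by
    intro x
    have he : (fun t => g t x) = (fun p : ℝ × ℝ => g p.1 p.2) ∘ (fun t : ℝ => (t, x)) := rfl
    rw [he]
    exact hg_cont.comp (Continuous.continuousOn (by continuity)) (fun t ht => ⟨ht, trivial⟩)
  set F : ℝ → ℝ := fun t => ∫ x, g t x ∂μ with hF
  have hF_cont : ContinuousOn F (Set.Icc 0 β) := by
    refine continuousOn_of_dominated (bound := fun _ => M) ?_ ?_ (integrable_const M) ?_
    · exact fun t ht => (hg_slice t ht).aestronglyMeasurable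
    · exact fun t ht => ae_of_all _ (fun x => by rw [Real.norm_eq_abs]; exact hg_bdd t ht x)
    · exact ae_of_all _ (fun x => ht_slice x)
  have hFb : ∀ t ∈ Set.Icc 0 β, |F t| ≤ M := by
    intro t ht
    rw [hF]
    calc |∫ x, g t x ∂μ| = ‖∫ x, g t x ∂μ‖ := (Real.norm_eq_abs _).symm
      _ ≤ ∫ _x : ℝ, M ∂μ := by
          refine norm_integral_le_of_norm_le (integrable_const M) (ae_of_all _ fun x => ?_)
          rw [Real.norm_eq_abs]
          exact hg_bdd t ht x
      _ = M := by simp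
  have hEg : ∀ (t : ℝ), t ∈ Set.Icc 0 β → ∀ k, ∫ ω, g t (W k ω) = F t := by
    intro t ht k
    have h1 : F t = ∫ x, g t x ∂μ := rfl
    rw [h1, ← hW_law k]
    exact (integral_map (hW_meas k).aemeasurable
      (hg_slice t ht).aestronglyMeasurable).symm
  -- centered variables
  set Y : ℕ → ℕ → Ω → ℝ :=
    fun L k ω => g (c ((k:ℝ)/(L:ℝ))) (W k ω) - F (c ((k:ℝ)/(L:ℝ))) with hY
  have hYmeas : ∀ L k, Measurable (Y L k) := fun L k =>
    ((hg_slice _ (hcmem _)).measurable.comp (hW_meas k)).sub measurable_const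
  have hYindep : ∀ L, iIndepFun (m := fun _ => Real.measurableSpace) (Y L) volume := by
    intro L
    exact hW_indep.comp (g := fun k => fun x => g (c ((k:ℝ)/(L:ℝ))) x - F (c ((k:ℝ)/(L:ℝ))))
      (fun k => ((hg_slice _ (hcmem _)).measurable.sub measurable_const))
  have hYbd : ∀ L k ω, |Y L k ω| ≤ 2 * (M + 1) := by
    intro L k ω
    rw [hY]
    calc |g (c ((k:ℝ)/(L:ℝ))) (W k ω) - F (c ((k:ℝ)/(L:ℝ)))|
        ≤ |g (c ((k:ℝ)/(L:ℝ))) (W k ω)| + |F (c ((k:ℝ)/(L:ℝ)))| := abs_sub _ _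
      _ ≤ M + M := add_le_add (hg_bdd _ (hcmem _) _) (hFb _ (hcmem _))
      _ ≤ 2 * (M + 1) := by linarith
  have hYint : ∀ (L k : ℕ), Integrable (fun ω => g (c ((k:ℝ)/(L:ℝ))) (W k ω)) :=
    fun L k => integrable_of_bdd
      ((hg_slice _ (hcmem _)).measurable.comp (hW_meas k)).aestronglyMeasurable
      (C := M) (fun ω => hg_bdd _ (hcmem _) _)
  have hYmean : ∀ L k, ∫ ω, Y L k ω = 0 := by
    intro L k
    rw [hY]
    rw [integral_sub (hYint L k) (integrable_const _), hEg _ (hcmem _) k, integral_const]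
    simp
  -- concentration step
  have key : ∀ j : ℕ, ∀ᵐ ω, ∀ᶠ L : ℕ in atTop,
      |∑ k ∈ Finset.Icc 1 ⌊β * (L:ℝ)⌋₊, Y L k ω| < (1/((j:ℝ)+1)) * L := by
    intro j
    set M' : ℝ := M + 1 with hM'
    have hM'pos : 0 < M' := by linarith
    set εj : ℝ := 1/((j:ℝ)+1) with hεj
    have hεjpos : 0 < εj := by positivity
    set s := min (εj/(8*M'^2*(β+1))) (1/(2*M')) with hs
    have hspos : 0 < s := lt_min (by positivity) (by positivity)
    have hsc : s * (2*M') ≤ 1 := by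
      calc s * (2*M') ≤ (1/(2*M')) * (2*M') := by
            gcongr
            exact min_le_right _ _
        _ = 1 := by field_simp
    set r : ℝ := Real.exp (-(s * εj / 2)) with hr
    have hr1 : r < 1 := Real.exp_lt_one_iff.mpr (by nlinarith)
    have hr0 : 0 ≤ r := (Real.exp_pos _).le
    have hexp : ∀ L : ℕ, Real.exp (-s * (εj * L)) *
        Real.exp (((Finset.Icc 1 ⌊β * (L:ℝ)⌋₊).card : ℝ) * ((2*M')^2 * s^2)) ≤ r^L := by
      intro L
      rw [← Real.exp_add, hr, ← Real.exp_nat_mul]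
      apply Real.exp_le_exp.2
      have hcard : ((Finset.Icc 1 ⌊β * (L:ℝ)⌋₊).card : ℝ) ≤ β * L := by
        rw [Nat.card_Icc]
        calc ((⌊β * (L:ℝ)⌋₊ + 1 - 1 : ℕ) : ℝ) = (⌊β * (L:ℝ)⌋₊ : ℝ) := by norm_num
          _ ≤ β * L := Nat.floor_le (by positivity)
      have hsle : s ≤ εj/(8*M'^2*(β+1)) := min_le_left _ _
      have hstep : β * ((2*M')^2 * s) ≤ εj / 2 := by
        have h1 : (2*M')^2 * s ≤ εj / (2*(β+1)) := by
          calc (2*M')^2 * s ≤ (2*M')^2 * (εj/(8*M'^2*(β+1))) := by gcongr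
            _ = εj / (2*(β+1)) := by field_simp; ring
        calc β * ((2*M')^2 * s) ≤ β * (εj / (2*(β+1))) := by gcongr
          _ ≤ εj / 2 := by
              have hb1 : (0:ℝ) < β + 1 := by linarith
              have he : β * (εj / (2*(β+1))) = εj / 2 * (β/(β+1)) := by field_simp
              rw [he]
              have hd1 : β / (β+1) ≤ 1 := (div_le_one hb1).mpr (by linarith)
              nlinarith [hεjpos.le]
      calc -s * (εj * L) + ((Finset.Icc 1 ⌊β * (L:ℝ)⌋₊).card : ℝ) * ((2*M')^2 * s^2)
          ≤ -s * (εj * L) + (β * L) * ((2*M')^2 * s^2) := by gcongr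
        _ = -s * (εj * L) + (β * ((2*M')^2 * s)) * s * L := by ring
        _ ≤ -s * (εj * L) + (εj / 2) * s * L := by gcongr
        _ = (L:ℝ) * -(s * εj / 2) := by ring
    have hLbd : ∀ L : ℕ,
        volume {ω | εj * L ≤ |∑ k ∈ Finset.Icc 1 ⌊β * (L:ℝ)⌋₊, Y L k ω|} ≤
          ENNReal.ofReal (r^L) + ENNReal.ofReal (r^L) := by
      intro L
      set t := Finset.Icc 1 ⌊β * (L:ℝ)⌋₊ with htdef
      have hch1 := chernoff_sum (Y L) (hYmeas L) (hYindep L)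
        (mul_pos two_pos hM'pos) hspos.le hsc
        (fun k ω => by rw [hM']; exact hYbd L k ω) (hYmean L) t (εj * L)
      have hch2 := chernoff_sum (fun k ω => -(Y L k ω))
        (fun k => (hYmeas L k).neg)
        ((hYindep L).comp (g := fun _ => fun x : ℝ => -x) (fun _ => measurable_neg))
        (mul_pos two_pos hM'pos) hspos.le hsc
        (fun k ω => by rw [abs_neg, hM']; exact hYbd L k ω)
        (fun k => by rw [integral_neg, hYmean L k, neg_zero]) t (εj * L)
      have hsub : {ω | εj * L ≤ |∑ k ∈ t, Y L k ω|} ⊆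
          {ω | εj * L ≤ ∑ k ∈ t, Y L k ω} ∪ {ω | εj * L ≤ ∑ k ∈ t, -(Y L k ω)} := by
        intro ω hω
        have hω' : εj * L ≤ |∑ k ∈ t, Y L k ω| := hω
        rcases le_abs.mp hω' with h | h
        · exact Set.mem_union_left _ h
        · refine Set.mem_union_right _ ?_
          show εj * L ≤ ∑ k ∈ t, -(Y L k ω)
          rw [Finset.sum_neg_distrib]
          exact h
      have hone : ∀ (Z : ℕ → Ω → ℝ),
          (volume {ω | εj * L ≤ ∑ k ∈ t, Z k ω}).toReal ≤
            Real.exp (-s * (εj * L)) * Real.exp ((t.card : ℝ) * ((2*M')^2 * s^2)) →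
          volume {ω | εj * L ≤ ∑ k ∈ t, Z k ω} ≤ ENNReal.ofReal (r^L) := by
        intro Z h
        calc volume {ω | εj * L ≤ ∑ k ∈ t, Z k ω}
            = ENNReal.ofReal ((volume {ω | εj * L ≤ ∑ k ∈ t, Z k ω}).toReal) :=
              (ENNReal.ofReal_toReal (measure_ne_top _ _)).symm
          _ ≤ ENNReal.ofReal (r^L) := ENNReal.ofReal_le_ofReal (h.trans (hexp L))
      calc volume {ω | εj * L ≤ |∑ k ∈ t, Y L k ω|}
          ≤ volume ({ω | εj * L ≤ ∑ k ∈ t, Y L k ω} ∪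
              {ω | εj * L ≤ ∑ k ∈ t, -(Y L k ω)}) := measure_mono hsub
        _ ≤ volume {ω | εj * L ≤ ∑ k ∈ t, Y L k ω} +
              volume {ω | εj * L ≤ ∑ k ∈ t, -(Y L k ω)} := measure_union_le _ _
        _ ≤ ENNReal.ofReal (r^L) + ENNReal.ofReal (r^L) :=
              add_le_add (hone _ hch1) (hone _ hch2)
    have hsum_ne : (∑' L : ℕ,
        volume {ω | εj * L ≤ |∑ k ∈ Finset.Icc 1 ⌊β * (L:ℝ)⌋₊, Y L k ω|}) ≠ ⊤ := by
      have hgeo : Summable (fun L : ℕ => r^L) := summable_geometric_of_lt_one hr0 hr1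
      refine ne_top_of_le_ne_top ?_ (ENNReal.tsum_le_tsum hLbd)
      rw [ENNReal.tsum_add, ← ENNReal.ofReal_tsum_of_nonneg (fun n => pow_nonneg hr0 n) hgeo]
      exact ENNReal.add_ne_top.2 ⟨ENNReal.ofReal_ne_top, ENNReal.ofReal_ne_top⟩
    filter_upwards [MeasureTheory.ae_eventually_notMem hsum_ne] with ω hω
    filter_upwards [hω] with L hL
    have : ¬ (εj * L ≤ |∑ k ∈ Finset.Icc 1 ⌊β * (L:ℝ)⌋₊, Y L k ω|) := hL
    rw [hεj]
    linarith [not_le.mp this]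
  have hconc : ∀ᵐ ω, Tendsto
      (fun L : ℕ => (1/(L:ℝ)) * ∑ k ∈ Finset.Icc 1 ⌊β * (L:ℝ)⌋₊, Y L k ω)
      atTop (nhds 0) := by
    filter_upwards [ae_all_iff.2 key] with ω hω
    rw [NormedAddCommGroup.tendsto_nhds_zero]
    intro ε hε
    obtain ⟨j, hj⟩ := exists_nat_one_div_lt hε
    filter_upwards [hω j, eventually_ge_atTop 1] with L h1 h2
    have hLpos : (0:ℝ) < L := by exact_mod_cast h2
    rw [Real.norm_eq_abs, abs_mul, abs_of_nonneg (by positivity : (0:ℝ) ≤ 1/(L:ℝ))]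
    calc (1/(L:ℝ)) * |∑ k ∈ Finset.Icc 1 ⌊β * (L:ℝ)⌋₊, Y L k ω|
        < (1/(L:ℝ)) * ((1/((j:ℝ)+1)) * L) := by
          exact mul_lt_mul_of_pos_left h1 (by positivity)
      _ = 1/((j:ℝ)+1) := by field_simp
      _ < ε := hj
  have hriem := riemann_tendsto hβ hF_cont
  filter_upwards [hconc] with ω hω
  have hcomb := hω.add hriem
  rw [zero_add] at hcomb
  refine Tendsto.congr' ?_ hcomb
  filter_upwards [eventually_ge_atTop 1] with L hL1
  have hLpos : (0:ℝ) < L := by exact_mod_cast hL1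
  have hck : ∀ k ∈ Finset.Icc 1 ⌊β * (L:ℝ)⌋₊, c ((k:ℝ)/(L:ℝ)) = (k:ℝ)/(L:ℝ) := by
    intro k hk
    refine hceq _ ⟨by positivity, ?_⟩
    rw [div_le_iff₀ hLpos]
    exact (Nat.le_floor_iff (by positivity)).mp (Finset.mem_Icc.mp hk).2
  rw [← mul_add, ← Finset.sum_add_distrib]
  congr 1
  refine Finset.sum_congr rfl (fun k hk => ?_)
  rw [hY]
  simp only [hck k hk]
  ring
end
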